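/- arXiv:math/0003081 — 5 statements merged into one kernel-verified Lean document; each statement's English description precedes it below -/
import Mathlib

section
/- Let f=(h₀,h₁,h₂;q₀,q₁,q₂) be a 6-tuple of integers satisfying conditions (I)–(IV). Then each of the four maps ι₀, ι₁, ι₂, ι₃ is a well-defined fixed-point-free involution of the set V(f) (so that Γ(f) is a 4-coloured graph). -/
/-!
Common setup: 6-tuples, the coloured graph Γ(f), conditions (I)–(VI),
the maps ψ₁, ψ₂, ψ₃, σ, equivalences, traps, canonical/minimal/root tuples.
-/

namespace GMN

/-- A 6-tuple `(h₀,h₁,h₂;q₀,q₁,q₂)` of integers. -/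
structure Tuple where
  h0 : ℤ
  h1 : ℤ
  h2 : ℤ
  q0 : ℤ
  q1 : ℤ
  q2 : ℤ

namespace Tuple

/-- The `h`-components indexed by `ℤ₃`. -/
def h (f : Tuple) : ZMod 3 → ℤ := fun i => if i = 0 then f.h0 else if i = 1 then f.h1 else f.h2

/-- The `q`-components indexed by `ℤ₃`. -/
def q (f : Tuple) : ZMod 3 → ℤ := fun i => if i = 0 then f.q0 else if i = 1 then f.q1 else f.q2

/-- `2lᵢ = h_{i-1} + hᵢ`. -/
def twol (f : Tuple) (i : ZMod 3) : ℤ := f.h (i - 1) + f.h i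

end Tuple

/-- Condition (I): all `hᵢ` positive. -/
def CondI (f : Tuple) : Prop := ∀ i, 0 < f.h i

/-- Condition (II): all `hᵢ` of the same parity. -/
def CondII (f : Tuple) : Prop := ∀ i j, f.h i % 2 = f.h j % 2

/-- Condition (III): `0 ≤ qᵢ < 2lᵢ`. -/
def CondIII (f : Tuple) : Prop := ∀ i, 0 ≤ f.q i ∧ f.q i < f.twol i

/-- Condition (IV): all `qᵢ` of the same parity. -/
def CondIV (f : Tuple) : Prop := ∀ i j, f.q i % 2 = f.q j % 2

/-- Conditions (I)–(IV) together. -/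
def CondsI_IV (f : Tuple) : Prop := CondI f ∧ CondII f ∧ CondIII f ∧ CondIV f

/-- Condition (V): `hᵢ + qᵢ` odd. -/
def CondV (f : Tuple) : Prop := ∀ i, (f.h i + f.q i) % 2 = 1

/-- The vertex set `V(f) = ⋃ᵢ {i} × ℤ_{2lᵢ}`, with second coordinates as least
nonnegative residues. -/
def Vtx (f : Tuple) : Set (ZMod 3 × ℤ) := {p | 0 ≤ p.2 ∧ p.2 < f.twol p.1}

/-- `ι₀(i,j) = (i, j + (−1)^j)`, second coordinate mod `2lᵢ`. -/
def iota0 (f : Tuple) (p : ZMod 3 × ℤ) : ZMod 3 × ℤ :=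
  (p.1, (if p.2 % 2 = 0 then p.2 + 1 else p.2 - 1) % f.twol p.1)

/-- `ι₁(i,j) = (i, j − (−1)^j)`, second coordinate mod `2lᵢ`. -/
def iota1 (f : Tuple) (p : ZMod 3 × ℤ) : ZMod 3 × ℤ :=
  (p.1, (if p.2 % 2 = 0 then p.2 - 1 else p.2 + 1) % f.twol p.1)

/-- `ι₂(i,j) = (i+1, −j−1)` if `0 ≤ j ≤ hᵢ−1`, and `(i−1, 2lᵢ−j−1)` if `hᵢ ≤ j ≤ 2lᵢ−1`. -/
def iota2 (f : Tuple) (p : ZMod 3 × ℤ) : ZMod 3 × ℤ :=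
  if p.2 < f.h p.1 then (p.1 + 1, (-p.2 - 1) % f.twol (p.1 + 1))
  else (p.1 - 1, (f.twol p.1 - p.2 - 1) % f.twol (p.1 - 1))

/-- `ρ(i,j) = (i, j + qᵢ)`. -/
def rho (f : Tuple) (p : ZMod 3 × ℤ) : ZMod 3 × ℤ :=
  (p.1, (p.2 + f.q p.1) % f.twol p.1)

/-- `ρ⁻¹(i,j) = (i, j − qᵢ)`. -/
def rhoInv (f : Tuple) (p : ZMod 3 × ℤ) : ZMod 3 × ℤ :=
  (p.1, (p.2 - f.q p.1) % f.twol p.1)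

/-- `ι₃ = ρ ∘ ι₂ ∘ ρ⁻¹`. -/
def iota3 (f : Tuple) : ZMod 3 × ℤ → ZMod 3 × ℤ :=
  rho f ∘ iota2 f ∘ rhoInv f

/-- The four involutions of `Γ(f)`, indexed by the colour `c ∈ {0,1,2,3}`. -/
def iota (f : Tuple) : Fin 4 → ZMod 3 × ℤ → ZMod 3 × ℤ
  | 0 => iota0 f
  | 1 => iota1 f
  | 2 => iota2 f
  | 3 => iota3 f

/-- One step along an edge of `Γ(f)` whose colour lies in `S`, within `V(f)`. -/
def Step (f : Tuple) (S : Set (Fin 4)) (a b : ZMod 3 × ℤ) : Prop :=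
  a ∈ Vtx f ∧ b ∈ Vtx f ∧ ∃ c ∈ S, b = iota f c a

/-- The orbit relation on `V(f)` of the subgroup generated by the involutions with
colours in `S` (the `S`-residue relation). -/
def OrbRel (f : Tuple) (S : Set (Fin 4)) : ZMod 3 × ℤ → ZMod 3 × ℤ → Prop :=
  Relation.EqvGen (Step f S)

/-- The subgroup generated by the colours in `S` has exactly three orbits on `V(f)`. -/
def ThreeOrbits (f : Tuple) (S : Set (Fin 4)) : Prop :=
  ∃ a b c, a ∈ Vtx f ∧ b ∈ Vtx f ∧ c ∈ Vtx f ∧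
    ¬ OrbRel f S a b ∧ ¬ OrbRel f S a c ∧ ¬ OrbRel f S b c ∧
    ∀ v ∈ Vtx f, OrbRel f S a v ∨ OrbRel f S b v ∨ OrbRel f S c v

/-- Admissibility: conditions (I)–(IV), (V), and (VI) (three `{2,3}`-residues). -/
def Admissible (f : Tuple) : Prop :=
  CondsI_IV f ∧ CondV f ∧ ThreeOrbits f {2, 3}

/-- `ψ₁(h₀,h₁,h₂;q₀,q₁,q₂) = (h₁,h₂,h₀;q₁,q₂,q₀)`. -/
def psi1 (f : Tuple) : Tuple := ⟨f.h1, f.h2, f.h0, f.q1, f.q2, f.q0⟩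

/-- `ψ₂(h₀,h₁,h₂;q₀,q₁,q₂) = (h₂,h₁,h₀;q₀,q₂,q₁)`. -/
def psi2 (f : Tuple) : Tuple := ⟨f.h2, f.h1, f.h0, f.q0, f.q2, f.q1⟩

/-- `ψ₃(h₀,h₁,h₂;q₀,q₁,q₂) = (h₀,h₁,h₂;−q₀,−q₁,−q₂)`, the `q`-entries reduced to their
least nonnegative residues mod the respective `2lᵢ`. -/
def psi3 (f : Tuple) : Tuple :=
  ⟨f.h0, f.h1, f.h2,
    (-f.q0) % (f.h2 + f.h0), (-f.q1) % (f.h0 + f.h1), (-f.q2) % (f.h1 + f.h2)⟩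

/-- The 2-symmetric transformation `σ`, with the `q′`-entries reduced to their least
nonnegative residues mod the respective `2lᵢ′ = h′_{i−1} + h′ᵢ`. -/
def sigma (f : Tuple) : Tuple :=
  if f.q0 = 0 then f
  else if f.q0 < f.h0 ∧ f.q0 < f.h2 then
    ⟨f.h0 + f.h1 - f.q0, f.q0, f.h2 + f.h1 - f.q0,
      (f.h0 + f.h1 + f.h2 - 2 * f.q0) % ((f.h2 + f.h1 - f.q0) + (f.h0 + f.h1 - f.q0)),
      (f.q0 + f.q1 + f.h1) % ((f.h0 + f.h1 - f.q0) + f.q0),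
      (f.q0 + f.q2 + f.h1) % (f.q0 + (f.h2 + f.h1 - f.q0))⟩
  else if f.h0 < f.q0 ∧ f.h2 < f.q0 then
    ⟨f.q0 + f.h1 - f.h2, f.h0 + f.h2 - f.q0, f.q0 + f.h1 - f.h0,
      f.h1 % ((f.q0 + f.h1 - f.h0) + (f.q0 + f.h1 - f.h2)),
      (f.q0 + f.q1 - f.h2) % ((f.q0 + f.h1 - f.h2) + (f.h0 + f.h2 - f.q0)),
      (f.q0 + f.q2 - f.h0) % ((f.h0 + f.h2 - f.q0) + (f.q0 + f.h1 - f.h0))⟩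
  else if f.q0 < f.h2 then
    ⟨f.h1, f.h0, f.h1 + f.h2 - f.h0,
      (f.h1 + f.h2 - f.q0) % ((f.h1 + f.h2 - f.h0) + f.h1),
      f.q1 % (f.h1 + f.h0),
      (2 * f.q0 + f.q2 + f.h1 - f.h0) % (f.h0 + (f.h1 + f.h2 - f.h0))⟩
  else
    ⟨f.h1 + f.h0 - f.h2, f.h2, f.h1,
      (f.h1 + f.h0 - f.q0) % (f.h1 + (f.h1 + f.h0 - f.h2)),
      (2 * f.q0 + f.q1 + f.h1 - f.h2) % ((f.h1 + f.h0 - f.h2) + f.h2),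
      f.q2 % (f.h2 + f.h1)⟩

/-- The complexity `ν(f) = h₀ + h₁ + h₂`. -/
def nu (f : Tuple) : ℤ := f.h0 + f.h1 + f.h2

/-- `δ(f) = ν(σ(f)) − ν(f)`. -/
def delta (f : Tuple) : ℤ := nu (sigma f) - nu f

/-- One step of the action of a generator of `H` on admissible 6-tuples. -/
def HStep (a b : Tuple) : Prop :=
  Admissible a ∧ Admissible b ∧ (b = psi1 a ∨ b = psi2 a ∨ b = psi3 a)

/-- `H`-equivalence: the orbit relation of `H = ⟨ψ₁,ψ₂,ψ₃⟩` on `ℱ`. -/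
def HEquiv : Tuple → Tuple → Prop := Relation.EqvGen HStep

/-- One step of the action of a generator of `H′` on admissible 6-tuples. -/
def H'Step (a b : Tuple) : Prop :=
  Admissible a ∧ Admissible b ∧ (b = psi2 a ∨ b = psi3 a)

/-- `H′`-equivalence: the orbit relation of `H′ = ⟨ψ₂,ψ₃⟩` on `ℱ`. -/
def H'Equiv : Tuple → Tuple → Prop := Relation.EqvGen H'Step

/-- One step of the action of a generator of `G` on admissible 6-tuples. -/
def GStep (a b : Tuple) : Prop :=
  Admissible a ∧ Admissible b ∧ (b = psi1 a ∨ b = psi2 a ∨ b = psi3 a ∨ b = sigma a)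

/-- `G`-equivalence: the orbit relation of `G = ⟨ψ₁,ψ₂,ψ₃,σ⟩` on `ℱ`. -/
def GEquiv : Tuple → Tuple → Prop := Relation.EqvGen GStep

/-- Membership in the set `{0, r+1, r+2, …, s−1}`. -/
def inT (r s x : ℤ) : Prop := x = 0 ∨ (r < x ∧ x < s)

/-- A trap of type `(r,s)`: `H`-equivalent to an admissible `(r,r,s;q₀,0,q₂)` with
`q₀+k(q₀+q₂), q₂+k(q₀+q₂) ∈ {0,r+1,…,s−1} (mod r+s)` for all `k ≥ 0`. -/
def IsTrapOfType (r s : ℤ) (f : Tuple) : Prop :=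
  ∃ g : Tuple, Admissible g ∧ HEquiv f g ∧
    g.h0 = r ∧ g.h1 = r ∧ g.h2 = s ∧ g.q1 = 0 ∧
    ∀ k : ℕ, inT r s ((g.q0 + (k : ℤ) * (g.q0 + g.q2)) % (r + s)) ∧
             inT r s ((g.q2 + (k : ℤ) * (g.q0 + g.q2)) % (r + s))

/-- A trap: a trap of some type `(r,s)` with `0 < r ≤ s`. -/
def IsTrap (f : Tuple) : Prop := ∃ r s : ℤ, 0 < r ∧ r ≤ s ∧ IsTrapOfType r s f

/-- The canonical representative conditions (a)–(i) (together with admissibility). -/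
def Canonical (f : Tuple) : Prop :=
  Admissible f ∧
  (f.h0 ≤ f.h1 ∧ f.h1 ≤ f.h2) ∧
  (2 * f.q0 ≤ f.h2 + f.h0) ∧
  ((f.q0 = 0 ∨ 2 * f.q0 = f.h2 + f.h0) → 2 * f.q1 ≤ f.h0 + f.h1) ∧
  ((f.q0 = 0 ∨ 2 * f.q0 = f.h2 + f.h0) → (f.q1 = 0 ∨ 2 * f.q1 = f.h0 + f.h1) →
    2 * f.q2 ≤ f.h1 + f.h2) ∧
  (f.h0 = f.h1 → f.q0 ≤ f.q2 ∧ f.q2 ≤ (-f.q0) % (f.h2 + f.h0)) ∧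
  (f.h0 = f.h1 → (f.q2 = f.q0 ∨ f.q2 = (-f.q0) % (f.h2 + f.h0)) → f.q1 ≤ f.h1) ∧
  (f.h1 = f.h2 → f.q0 ≤ f.q1 ∧ f.q1 ≤ (-f.q0) % (f.h2 + f.h0)) ∧
  (f.h1 = f.h2 → (f.q1 = f.q0 ∨ f.q1 = (-f.q0) % (f.h2 + f.h0)) → f.q2 ≤ f.h2) ∧
  (f.h0 = f.h1 ∧ f.h1 = f.h2 → f.q1 ≤ f.q2)

/-- A canonical 6-tuple is minimal if its complexity is minimal in its `G`-orbit. -/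
def Minimal (f : Tuple) : Prop :=
  Canonical f ∧ ∀ g, GEquiv f g → nu f ≤ nu g

/-- A canonical 6-tuple is a root if every `G`-equivalent but not `H`-equivalent
6-tuple has strictly larger complexity. -/
def Root (f : Tuple) : Prop :=
  Canonical f ∧ ∀ g, GEquiv f g → ¬ HEquiv f g → nu f < nu g

/-- A colour-preserving isomorphism between `Γ(f)` and `Γ(f′)`. -/
def CPIso (f f' : Tuple) : Prop :=
  ∃ φ : ZMod 3 × ℤ → ZMod 3 × ℤ, Set.BijOn φ (Vtx f) (Vtx f') ∧
    ∀ c : Fin 4, ∀ v ∈ Vtx f, φ (iota f c v) = iota f' c (φ v)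

/-- The set of admissible 6-tuples, as a type. -/
abbrev AdmTuple := {f : Tuple // Admissible f}


section Stmt0Aux

variable {f : Tuple}

lemma twol_pos (hf : CondsI_IV f) (i : ZMod 3) : 0 < f.twol i := by
  have h1 := hf.1 (i - 1); have h2 := hf.1 i
  unfold Tuple.twol; omega

lemma twol_even (hf : CondsI_IV f) (i : ZMod 3) : f.twol i % 2 = 0 := by
  have := hf.2.1 (i - 1) i
  unfold Tuple.twol; omega

lemma emod_eq' {a n b : ℤ} (k : ℤ) (hb : a = b + n * k) (h1 : 0 ≤ b) (h2 : b < n) :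
    a % n = b := by
  subst hb; rw [Int.add_mul_emod_self_left]; exact Int.emod_eq_of_lt h1 h2

lemma emod_add_left' (a b n : ℤ) : (a % n + b) % n = (a + b) % n := by
  rw [Int.add_emod, Int.emod_emod_of_dvd _ dvd_rfl, ← Int.add_emod]

lemma emod_sub_left' (a b n : ℤ) : (a % n - b) % n = (a - b) % n := by
  rw [Int.sub_emod, Int.emod_emod_of_dvd _ dvd_rfl, ← Int.sub_emod]

lemma mem_Vtx {p : ZMod 3 × ℤ} : p ∈ Vtx f ↔ 0 ≤ p.2 ∧ p.2 < f.twol p.1 := Iff.rfl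

lemma mem_Vtx' {i : ZMod 3} {x : ℤ} (h1 : 0 ≤ x) (h2 : x < f.twol i) : (i, x) ∈ Vtx f := ⟨h1, h2⟩

lemma twol_succ (i : ZMod 3) : f.twol (i + 1) = f.h i + f.h (i + 1) := by
  unfold Tuple.twol; rw [add_sub_cancel_right]

lemma iota0_spec (hf : CondsI_IV f) {i : ZMod 3} {j : ℤ} (h0 : 0 ≤ j) (h1 : j < f.twol i) :
    iota0 f (i, j) = (i, if j % 2 = 0 then j + 1 else j - 1) := by
  have he := twol_even hf i
  unfold iota0
  split_ifs with hp
  · simp only [Prod.mk.injEq, true_and]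
    exact Int.emod_eq_of_lt (by omega) (by omega)
  · simp only [Prod.mk.injEq, true_and]
    exact Int.emod_eq_of_lt (by omega) (by omega)

lemma iota1_spec (hf : CondsI_IV f) {i : ZMod 3} {j : ℤ} (h0 : 0 ≤ j) (h1 : j < f.twol i) :
    iota1 f (i, j) = (i, if j % 2 = 0 then (if j = 0 then f.twol i - 1 else j - 1)
      else (if j = f.twol i - 1 then 0 else j + 1)) := by
  have he := twol_even hf i
  have hp := twol_pos hf i
  unfold iota1
  simp only [Prod.mk.injEq, true_and]
  split_ifs with hp1 hp2 hp3
  · subst hp2; exact emod_eq' (-1) (by ring) (by omega) (by omega)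
  · exact Int.emod_eq_of_lt (by omega) (by omega)
  · rw [hp3]; exact emod_eq' 1 (by ring) (by omega) (by omega)
  · exact Int.emod_eq_of_lt (by omega) (by omega)

lemma iota2_spec1 (hf : CondsI_IV f) {i : ZMod 3} {j : ℤ} (h0 : 0 ≤ j) (h1 : j < f.h i) :
    iota2 f (i, j) = (i + 1, f.twol (i + 1) - j - 1) := by
  have e2 := twol_succ (f := f) i
  have hi1 := hf.1 (i + 1)
  unfold iota2
  rw [if_pos (by exact h1)]
  simp only [Prod.mk.injEq, true_and]
  exact emod_eq' (-1) (by ring) (by omega) (by omega)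

lemma iota2_spec2 (hf : CondsI_IV f) {i : ZMod 3} {j : ℤ} (h1 : f.h i ≤ j) (h2 : j < f.twol i) :
    iota2 f (i, j) = (i - 1, f.twol i - j - 1) := by
  have e1 : f.twol i = f.h (i - 1) + f.h i := rfl
  have e2 : f.twol (i - 1) = f.h (i - 1 - 1) + f.h (i - 1) := rfl
  have hi1 := hf.1 (i - 1 - 1)
  unfold iota2
  rw [if_neg (by exact not_lt.mpr h1)]
  simp only [Prod.mk.injEq, true_and]
  exact Int.emod_eq_of_lt (by omega) (by omega)

lemma iota2_mem (hf : CondsI_IV f) {p : ZMod 3 × ℤ} (hp : p ∈ Vtx f) : iota2 f p ∈ Vtx f := by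
  obtain ⟨i, j⟩ := p
  obtain ⟨h0, h1⟩ := hp
  simp only at h0 h1
  by_cases hc : j < f.h i
  · rw [iota2_spec1 hf h0 hc]
    have e2 := twol_succ (f := f) i
    have hi1 := hf.1 (i + 1)
    exact mem_Vtx' (by omega) (by omega)
  · push_neg at hc
    rw [iota2_spec2 hf hc h1]
    have e1 : f.twol i = f.h (i - 1) + f.h i := rfl
    have e2 : f.twol (i - 1) = f.h (i - 1 - 1) + f.h (i - 1) := rfl
    have hi1 := hf.1 (i - 1 - 1)
    exact mem_Vtx' (by omega) (by omega)

lemma iota2_invol (hf : CondsI_IV f) {p : ZMod 3 × ℤ} (hp : p ∈ Vtx f) : iota2 f (iota2 f p) = p := by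
  obtain ⟨i, j⟩ := p
  obtain ⟨h0, h1⟩ := hp
  simp only at h0 h1
  by_cases hc : j < f.h i
  · rw [iota2_spec1 hf h0 hc]
    have e2 := twol_succ (f := f) i
    have hi1 := hf.1 (i + 1)
    have hh : f.h (i + 1) ≤ f.twol (i + 1) - j - 1 := by omega
    rw [iota2_spec2 hf hh (by omega)]
    simp only [add_sub_cancel_right, Prod.mk.injEq, true_and]
    omega
  · push_neg at hc
    rw [iota2_spec2 hf hc h1]
    have e1 : f.twol i = f.h (i - 1) + f.h i := rfl
    have e2 : f.twol (i - 1) = f.h (i - 1 - 1) + f.h (i - 1) := rfl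
    have hi1 := hf.1 (i - 1 - 1)
    have hh : f.twol i - j - 1 < f.h (i - 1) := by omega
    rw [iota2_spec1 hf (by omega) hh]
    have e3 : f.twol (i - 1 + 1) = f.twol i := by rw [sub_add_cancel]
    simp only [sub_add_cancel, Prod.mk.injEq, true_and, e3]
    omega

lemma iota2_fst (p : ZMod 3 × ℤ) :
    (iota2 f p).1 = p.1 + 1 ∨ (iota2 f p).1 = p.1 - 1 := by
  unfold iota2; split_ifs <;> simp

lemma zmod3_succ_ne (i : ZMod 3) : i + 1 ≠ i := by
  intro h
  have : (1 : ZMod 3) = 0 := by rwa [add_eq_left] at h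
  exact one_ne_zero this

lemma zmod3_pred_ne (i : ZMod 3) : i - 1 ≠ i := by
  intro h
  have : (1 : ZMod 3) = 0 := by rwa [sub_eq_self] at h
  exact one_ne_zero this

lemma iota2_ne (p : ZMod 3 × ℤ) : iota2 f p ≠ p := by
  intro h
  rcases iota2_fst (f := f) p with h1 | h1 <;> rw [h] at h1
  · exact zmod3_succ_ne p.1 h1.symm
  · exact zmod3_pred_ne p.1 h1.symm

lemma rho_mem (hf : CondsI_IV f) (p : ZMod 3 × ℤ) : rho f p ∈ Vtx f := by
  have hp := twol_pos hf p.1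
  exact ⟨Int.emod_nonneg _ (by omega), Int.emod_lt_of_pos _ hp⟩

lemma rhoInv_mem (hf : CondsI_IV f) (p : ZMod 3 × ℤ) : rhoInv f p ∈ Vtx f := by
  have hp := twol_pos hf p.1
  exact ⟨Int.emod_nonneg _ (by omega), Int.emod_lt_of_pos _ hp⟩

lemma rho_rhoInv {p : ZMod 3 × ℤ} (hp : p ∈ Vtx f) : rho f (rhoInv f p) = p := by
  obtain ⟨i, j⟩ := p
  obtain ⟨h0, h1⟩ := hp
  simp only at h0 h1
  unfold rho rhoInv
  simp only [Prod.mk.injEq, true_and]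
  rw [emod_add_left', sub_add_cancel]
  exact Int.emod_eq_of_lt h0 h1

lemma rhoInv_rho {p : ZMod 3 × ℤ} (hp : p ∈ Vtx f) : rhoInv f (rho f p) = p := by
  obtain ⟨i, j⟩ := p
  obtain ⟨h0, h1⟩ := hp
  simp only at h0 h1
  unfold rho rhoInv
  simp only [Prod.mk.injEq, true_and]
  rw [emod_sub_left', add_sub_cancel_right]
  exact Int.emod_eq_of_lt h0 h1

end Stmt0Aux


/-- for a 6-tuple satisfying (I)–(IV), each `ι_c` is a well-defined
fixed-point-free involution of `V(f)`. -/
theorem stmt_0 (f : Tuple) (hf : CondsI_IV f) (c : Fin 4) :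
    Set.MapsTo (iota f c) (Vtx f) (Vtx f) ∧
    (∀ v ∈ Vtx f, iota f c (iota f c v) = v) ∧
    (∀ v ∈ Vtx f, iota f c v ≠ v) := by
  fin_cases c
  · -- colour 0
    show Set.MapsTo (iota0 f) (Vtx f) (Vtx f) ∧
      (∀ v ∈ Vtx f, iota0 f (iota0 f v) = v) ∧ (∀ v ∈ Vtx f, iota0 f v ≠ v)
    refine ⟨?_, ?_, ?_⟩
    · rintro ⟨i, j⟩ ⟨h0, h1⟩
      simp only at h0 h1
      have he := twol_even hf i
      rw [iota0_spec hf h0 h1]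
      split_ifs <;> exact mem_Vtx' (by omega) (by omega)
    · rintro ⟨i, j⟩ ⟨h0, h1⟩
      simp only at h0 h1
      have he := twol_even hf i
      rw [iota0_spec hf h0 h1]
      split_ifs with hj
      · rw [iota0_spec hf (by omega) (by omega), if_neg (by omega)]
        simp only [Prod.mk.injEq, true_and]; omega
      · rw [iota0_spec hf (by omega) (by omega), if_pos (by omega)]
        simp only [Prod.mk.injEq, true_and]; omega
    · rintro ⟨i, j⟩ ⟨h0, h1⟩ h
      simp only at h0 h1
      rw [iota0_spec hf h0 h1] at h
      simp only [Prod.mk.injEq, true_and] at h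
      split_ifs at h <;> omega
  · -- colour 1
    show Set.MapsTo (iota1 f) (Vtx f) (Vtx f) ∧
      (∀ v ∈ Vtx f, iota1 f (iota1 f v) = v) ∧ (∀ v ∈ Vtx f, iota1 f v ≠ v)
    refine ⟨?_, ?_, ?_⟩
    · rintro ⟨i, j⟩ ⟨h0, h1⟩
      simp only at h0 h1
      have he := twol_even hf i
      have hp := twol_pos hf i
      rw [iota1_spec hf h0 h1]
      split_ifs <;> exact mem_Vtx' (by omega) (by omega)
    · rintro ⟨i, j⟩ ⟨h0, h1⟩
      simp only at h0 h1
      have he := twol_even hf i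
      have hp := twol_pos hf i
      rw [iota1_spec hf h0 h1]
      split_ifs with hj hz hz
      · rw [iota1_spec hf (by omega) (by omega), if_neg (by omega), if_pos rfl]
        simp only [Prod.mk.injEq, true_and]; omega
      · rw [iota1_spec hf (by omega) (by omega), if_neg (by omega), if_neg (by omega)]
        simp only [Prod.mk.injEq, true_and]; omega
      · rw [iota1_spec hf (by omega) (by omega), if_pos (by omega), if_pos rfl]
        simp only [Prod.mk.injEq, true_and]; omega
      · rw [iota1_spec hf (by omega) (by omega), if_pos (by omega), if_neg (by omega)]
        simp only [Prod.mk.injEq, true_and]; omega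
    · rintro ⟨i, j⟩ ⟨h0, h1⟩ h
      simp only at h0 h1
      have he := twol_even hf i
      have hp := twol_pos hf i
      rw [iota1_spec hf h0 h1] at h
      simp only [Prod.mk.injEq, true_and] at h
      split_ifs at h <;> omega
  · -- colour 2
    exact ⟨fun p hp => iota2_mem hf hp, fun v hv => iota2_invol hf hv,
      fun v _ => iota2_ne v⟩
  · -- colour 3
    show Set.MapsTo (iota3 f) (Vtx f) (Vtx f) ∧
      (∀ v ∈ Vtx f, iota3 f (iota3 f v) = v) ∧ (∀ v ∈ Vtx f, iota3 f v ≠ v)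
    refine ⟨?_, ?_, ?_⟩
    · intro p _
      exact rho_mem hf _
    · intro v hv
      show rho f (iota2 f (rhoInv f (rho f (iota2 f (rhoInv f v))))) = v
      have h1 : rhoInv f v ∈ Vtx f := rhoInv_mem hf v
      have h2 : iota2 f (rhoInv f v) ∈ Vtx f := iota2_mem hf h1
      rw [rhoInv_rho h2, iota2_invol hf h1, rho_rhoInv hv]
    · intro v _ h
      have h1 := congrArg Prod.fst h
      have h2 : (iota3 f v).1 = (iota2 f (rhoInv f v)).1 := rfl
      have h3 : (rhoInv f v).1 = v.1 := rfl
      rw [h2] at h1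
      rcases iota2_fst (f := f) (rhoInv f v) with h4 | h4 <;> rw [h4, h3] at h1
      · exact zmod3_succ_ne v.1 h1
      · exact zmod3_pred_ne v.1 h1

end GMN
end

section
/- The subgroup H=⟨ψ₁,ψ₂,ψ₃⟩ of the group of bijections of ℱ is isomorphic to the dihedral group D₆ of order 12 (the symmetry group of a regular hexagon); moreover H=H′∪H′ψ₁∪H′ψ₁², where H′=⟨ψ₂,ψ₃⟩ and H′ψ₁^e denotes the right coset {h∘ψ₁^e : h∈H′}. -/
/-!
Common setup: 6-tuples, the coloured graph Γ(f), conditions (I)–(VI),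
the maps ψ₁, ψ₂, ψ₃, σ, equivalences, traps, canonical/minimal/root tuples.
-/

namespace GMN

/-! ### Auxiliary material for stmt_9 -/

instance : DecidableEq Tuple := fun a b =>
  decidable_of_iff
    (a.h0 = b.h0 ∧ a.h1 = b.h1 ∧ a.h2 = b.h2 ∧ a.q0 = b.q0 ∧ a.q1 = b.q1 ∧ a.q2 = b.q2)
    (by cases a; cases b; simp)

lemma neg_emod_lt {q m : ℤ} (h0 : 0 ≤ q) (h1 : q < m) : -(-q % m) % m = q := by
  rcases eq_or_lt_of_le h0 with rfl | hq
  · simp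
  · have e0 : -q % m = (m - q) % m := by
      conv_lhs => rw [show -q = m - q + m * (-1) by ring]
      exact Int.add_mul_emod_self_left ..
    have e1 : (m - q) % m = m - q := Int.emod_eq_of_lt (by omega) (by omega)
    have e2 : -(m - q) % m = q % m := by
      conv_lhs => rw [show -(m-q) = q + m * (-1) by ring]
      exact Int.add_mul_emod_self_left ..
    rw [e0, e1, e2, Int.emod_eq_of_lt h0 h1]

lemma psi111 (t : Tuple) : psi1 (psi1 (psi1 t)) = t := rfl
lemma psi22 (t : Tuple) : psi2 (psi2 t) = t := rfl
lemma psi13 (t : Tuple) : psi1 (psi3 t) = psi3 (psi1 t) := rfl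
lemma psi212 (t : Tuple) : psi2 (psi1 (psi2 t)) = psi1 (psi1 t) := rfl
lemma psi23 (t : Tuple) : psi2 (psi3 t) = psi3 (psi2 t) := by
  simp only [psi2, psi3]
  rw [add_comm t.h2 t.h0, add_comm t.h1 t.h2, add_comm t.h0 t.h1]

lemma psi33 (t : Tuple) (hIII : CondIII t) : psi3 (psi3 t) = t := by
  obtain ⟨h0, h1, h2, q0, q1, q2⟩ := t
  have b0 := hIII 0; have b1 := hIII 1; have b2 := hIII 2
  simp only [Tuple.q, Tuple.twol, Tuple.h,
    show ((0:ZMod 3)-1) = 2 by decide, show ((1:ZMod 3)-1) = 0 by decide,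
    show ((2:ZMod 3)-1) = 1 by decide, if_pos rfl,
    if_neg (show ¬((2:ZMod 3) = 0) by decide), if_neg (show ¬((2:ZMod 3) = 1) by decide),
    if_neg (show ¬((1:ZMod 3) = 0) by decide)] at b0 b1 b2
  simp only [psi3, Tuple.mk.injEq]
  exact ⟨trivial, trivial, trivial, neg_emod_lt b0.1 b0.2, neg_emod_lt b1.1 b1.2, neg_emod_lt b2.1 b2.2⟩

def f0 : Tuple := ⟨1,3,5,2,0,2⟩

def inv3 : ZMod 3 × ℤ → ℕ := fun p =>
  if p.1 = 0 then (if p.2 = 0 ∨ p.2 = 2 then 0 else if p.2 = 4 then 2 else 1)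
  else if p.1 = 1 then (if p.2 = 3 then 0 else if p.2 = 1 then 1 else 2)
  else (if p.2 = 3 then 0 else if p.2 = 1 ∨ p.2 = 5 ∨ p.2 = 7 then 2 else 1)

lemma pres : ∀ a b, Step f0 {2,3} a b → inv3 a = inv3 b := by
  rintro ⟨i, j⟩ b ⟨⟨hj0, hj1⟩, -, c, hc, rfl⟩
  simp only [Set.mem_insert_iff, Set.mem_singleton_iff] at hc
  fin_cases i <;> dsimp only at hj1 ⊢
  · replace hj1 : j < 6 := lt_of_lt_of_eq hj1 (by decide)
    rcases hc with rfl | rfl <;> interval_cases j <;> decide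
  · replace hj1 : j < 4 := lt_of_lt_of_eq hj1 (by decide)
    rcases hc with rfl | rfl <;> interval_cases j <;> decide
  · replace hj1 : j < 8 := lt_of_lt_of_eq hj1 (by decide)
    rcases hc with rfl | rfl <;> interval_cases j <;> decide

lemma orb_inv {x y} (h : OrbRel f0 {2,3} x y) : inv3 x = inv3 y := by
  induction h with
  | rel a b hab => exact pres a b hab
  | refl a => rfl
  | symm a b h ih => exact ih.symm
  | trans a b c h1 h2 ih1 ih2 => exact ih1.trans ih2
lemma orb_cover : ∀ v ∈ Vtx f0, OrbRel f0 {2,3} ((0:ZMod 3),(0:ℤ)) v ∨ OrbRel f0 {2,3} ((0:ZMod 3),(1:ℤ)) v ∨ OrbRel f0 {2,3} ((0:ZMod 3),(4:ℤ)) v := by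
  have o_0_0 : OrbRel f0 {2,3} ((0:ZMod 3), (0:ℤ)) ((0:ZMod 3), (0:ℤ)) := Relation.EqvGen.refl _
  have o_0_1 : OrbRel f0 {2,3} ((0:ZMod 3), (1:ℤ)) ((0:ZMod 3), (1:ℤ)) := Relation.EqvGen.refl _
  have o_0_4 : OrbRel f0 {2,3} ((0:ZMod 3), (4:ℤ)) ((0:ZMod 3), (4:ℤ)) := Relation.EqvGen.refl _
  have o_1_3 : OrbRel f0 {2,3} ((0:ZMod 3), (0:ℤ)) ((1:ZMod 3), (3:ℤ)) := Relation.EqvGen.trans _ _ _ o_0_0 (Relation.EqvGen.rel _ _ (⟨⟨by decide, by decide⟩, ⟨by decide, by decide⟩, 2, Or.inl rfl, by decide⟩ : Step f0 {2,3} ((0:ZMod 3), (0:ℤ)) ((1:ZMod 3), (3:ℤ))))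
  have o_2_3 : OrbRel f0 {2,3} ((0:ZMod 3), (0:ℤ)) ((2:ZMod 3), (3:ℤ)) := Relation.EqvGen.trans _ _ _ o_0_0 (Relation.EqvGen.rel _ _ (⟨⟨by decide, by decide⟩, ⟨by decide, by decide⟩, 3, Or.inr rfl, by decide⟩ : Step f0 {2,3} ((0:ZMod 3), (0:ℤ)) ((2:ZMod 3), (3:ℤ))))
  have o_0_2 : OrbRel f0 {2,3} ((0:ZMod 3), (0:ℤ)) ((0:ZMod 3), (2:ℤ)) := Relation.EqvGen.trans _ _ _ o_1_3 (Relation.EqvGen.rel _ _ (⟨⟨by decide, by decide⟩, ⟨by decide, by decide⟩, 3, Or.inr rfl, by decide⟩ : Step f0 {2,3} ((1:ZMod 3), (3:ℤ)) ((0:ZMod 3), (2:ℤ))))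
  have o_2_4 : OrbRel f0 {2,3} ((0:ZMod 3), (1:ℤ)) ((2:ZMod 3), (4:ℤ)) := Relation.EqvGen.trans _ _ _ o_0_1 (Relation.EqvGen.rel _ _ (⟨⟨by decide, by decide⟩, ⟨by decide, by decide⟩, 2, Or.inl rfl, by decide⟩ : Step f0 {2,3} ((0:ZMod 3), (1:ℤ)) ((2:ZMod 3), (4:ℤ))))
  have o_2_2 : OrbRel f0 {2,3} ((0:ZMod 3), (1:ℤ)) ((2:ZMod 3), (2:ℤ)) := Relation.EqvGen.trans _ _ _ o_0_1 (Relation.EqvGen.rel _ _ (⟨⟨by decide, by decide⟩, ⟨by decide, by decide⟩, 3, Or.inr rfl, by decide⟩ : Step f0 {2,3} ((0:ZMod 3), (1:ℤ)) ((2:ZMod 3), (2:ℤ))))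
  have o_0_5 : OrbRel f0 {2,3} ((0:ZMod 3), (1:ℤ)) ((0:ZMod 3), (5:ℤ)) := Relation.EqvGen.trans _ _ _ o_2_4 (Relation.EqvGen.rel _ _ (⟨⟨by decide, by decide⟩, ⟨by decide, by decide⟩, 3, Or.inr rfl, by decide⟩ : Step f0 {2,3} ((2:ZMod 3), (4:ℤ)) ((0:ZMod 3), (5:ℤ))))
  have o_0_3 : OrbRel f0 {2,3} ((0:ZMod 3), (1:ℤ)) ((0:ZMod 3), (3:ℤ)) := Relation.EqvGen.trans _ _ _ o_2_2 (Relation.EqvGen.rel _ _ (⟨⟨by decide, by decide⟩, ⟨by decide, by decide⟩, 2, Or.inl rfl, by decide⟩ : Step f0 {2,3} ((2:ZMod 3), (2:ℤ)) ((0:ZMod 3), (3:ℤ))))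
  have o_2_0 : OrbRel f0 {2,3} ((0:ZMod 3), (1:ℤ)) ((2:ZMod 3), (0:ℤ)) := Relation.EqvGen.trans _ _ _ o_0_5 (Relation.EqvGen.rel _ _ (⟨⟨by decide, by decide⟩, ⟨by decide, by decide⟩, 2, Or.inl rfl, by decide⟩ : Step f0 {2,3} ((0:ZMod 3), (5:ℤ)) ((2:ZMod 3), (0:ℤ))))
  have o_2_6 : OrbRel f0 {2,3} ((0:ZMod 3), (1:ℤ)) ((2:ZMod 3), (6:ℤ)) := Relation.EqvGen.trans _ _ _ o_0_3 (Relation.EqvGen.rel _ _ (⟨⟨by decide, by decide⟩, ⟨by decide, by decide⟩, 3, Or.inr rfl, by decide⟩ : Step f0 {2,3} ((0:ZMod 3), (3:ℤ)) ((2:ZMod 3), (6:ℤ))))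
  have o_1_1 : OrbRel f0 {2,3} ((0:ZMod 3), (1:ℤ)) ((1:ZMod 3), (1:ℤ)) := Relation.EqvGen.trans _ _ _ o_2_0 (Relation.EqvGen.rel _ _ (⟨⟨by decide, by decide⟩, ⟨by decide, by decide⟩, 3, Or.inr rfl, by decide⟩ : Step f0 {2,3} ((2:ZMod 3), (0:ℤ)) ((1:ZMod 3), (1:ℤ))))
  have o_2_1 : OrbRel f0 {2,3} ((0:ZMod 3), (4:ℤ)) ((2:ZMod 3), (1:ℤ)) := Relation.EqvGen.trans _ _ _ o_0_4 (Relation.EqvGen.rel _ _ (⟨⟨by decide, by decide⟩, ⟨by decide, by decide⟩, 2, Or.inl rfl, by decide⟩ : Step f0 {2,3} ((0:ZMod 3), (4:ℤ)) ((2:ZMod 3), (1:ℤ))))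
  have o_2_5 : OrbRel f0 {2,3} ((0:ZMod 3), (4:ℤ)) ((2:ZMod 3), (5:ℤ)) := Relation.EqvGen.trans _ _ _ o_0_4 (Relation.EqvGen.rel _ _ (⟨⟨by decide, by decide⟩, ⟨by decide, by decide⟩, 3, Or.inr rfl, by decide⟩ : Step f0 {2,3} ((0:ZMod 3), (4:ℤ)) ((2:ZMod 3), (5:ℤ))))
  have o_1_0 : OrbRel f0 {2,3} ((0:ZMod 3), (4:ℤ)) ((1:ZMod 3), (0:ℤ)) := Relation.EqvGen.trans _ _ _ o_2_1 (Relation.EqvGen.rel _ _ (⟨⟨by decide, by decide⟩, ⟨by decide, by decide⟩, 3, Or.inr rfl, by decide⟩ : Step f0 {2,3} ((2:ZMod 3), (1:ℤ)) ((1:ZMod 3), (0:ℤ))))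
  have o_1_2 : OrbRel f0 {2,3} ((0:ZMod 3), (4:ℤ)) ((1:ZMod 3), (2:ℤ)) := Relation.EqvGen.trans _ _ _ o_2_5 (Relation.EqvGen.rel _ _ (⟨⟨by decide, by decide⟩, ⟨by decide, by decide⟩, 2, Or.inl rfl, by decide⟩ : Step f0 {2,3} ((2:ZMod 3), (5:ℤ)) ((1:ZMod 3), (2:ℤ))))
  have o_2_7 : OrbRel f0 {2,3} ((0:ZMod 3), (4:ℤ)) ((2:ZMod 3), (7:ℤ)) := Relation.EqvGen.trans _ _ _ o_1_0 (Relation.EqvGen.rel _ _ (⟨⟨by decide, by decide⟩, ⟨by decide, by decide⟩, 2, Or.inl rfl, by decide⟩ : Step f0 {2,3} ((1:ZMod 3), (0:ℤ)) ((2:ZMod 3), (7:ℤ))))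
  rintro ⟨i, j⟩ ⟨hj0, hj1⟩
  fin_cases i <;> dsimp only at hj1 hj0 ⊢
  · replace hj1 : j < 6 := lt_of_lt_of_eq hj1 (by decide)
    interval_cases j
    · exact (Or.inl) o_0_0
    · exact (fun h => Or.inr (Or.inl h)) o_0_1
    · exact (Or.inl) o_0_2
    · exact (fun h => Or.inr (Or.inl h)) o_0_3
    · exact (fun h => Or.inr (Or.inr h)) o_0_4
    · exact (fun h => Or.inr (Or.inl h)) o_0_5
  · replace hj1 : j < 4 := lt_of_lt_of_eq hj1 (by decide)
    interval_cases j
    · exact (fun h => Or.inr (Or.inr h)) o_1_0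
    · exact (fun h => Or.inr (Or.inl h)) o_1_1
    · exact (fun h => Or.inr (Or.inr h)) o_1_2
    · exact (Or.inl) o_1_3
  · replace hj1 : j < 8 := lt_of_lt_of_eq hj1 (by decide)
    interval_cases j
    · exact (fun h => Or.inr (Or.inl h)) o_2_0
    · exact (fun h => Or.inr (Or.inr h)) o_2_1
    · exact (fun h => Or.inr (Or.inl h)) o_2_2
    · exact (Or.inl) o_2_3
    · exact (fun h => Or.inr (Or.inl h)) o_2_4
    · exact (fun h => Or.inr (Or.inr h)) o_2_5
    · exact (fun h => Or.inr (Or.inl h)) o_2_6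
    · exact (fun h => Or.inr (Or.inr h)) o_2_7
lemma adm_f0 : Admissible f0 := by
  refine ⟨⟨?_, ?_, ?_, ?_⟩, ?_,
    ((0:ZMod 3),(0:ℤ)), ((0:ZMod 3),(1:ℤ)), ((0:ZMod 3),(4:ℤ)),
    ⟨by decide, by decide⟩, ⟨by decide, by decide⟩, ⟨by decide, by decide⟩,
    fun h => absurd (orb_inv h) (by decide), fun h => absurd (orb_inv h) (by decide),
    fun h => absurd (orb_inv h) (by decide), orb_cover⟩
  · show ∀ i, 0 < f0.h i; decide
  · show ∀ i j, f0.h i % 2 = f0.h j % 2; decide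
  · show ∀ i, 0 ≤ f0.q i ∧ f0.q i < f0.twol i; decide
  · show ∀ i j, f0.q i % 2 = f0.q j % 2; decide
  · show ∀ i, (f0.h i + f0.q i) % 2 = 1; decide

def F0 : AdmTuple := ⟨f0, adm_f0⟩

/-- the subgroup `H = ⟨ψ₁, ψ₂, ψ₃⟩` of the group of bijections of `ℱ`
is isomorphic to the dihedral group `D₆` of order 12, and
`H = H′ ∪ H′ψ₁ ∪ H′ψ₁²` where `H′ = ⟨ψ₂, ψ₃⟩`. -/
theorem stmt_9 (P1 P2 P3 : Equiv.Perm AdmTuple)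
    (hP1 : ∀ f : AdmTuple, (P1 f : Tuple) = psi1 (f : Tuple))
    (hP2 : ∀ f : AdmTuple, (P2 f : Tuple) = psi2 (f : Tuple))
    (hP3 : ∀ f : AdmTuple, (P3 f : Tuple) = psi3 (f : Tuple)) :
    Nonempty ((Subgroup.closure {P1, P2, P3} : Subgroup (Equiv.Perm AdmTuple)) ≃*
      DihedralGroup 6) ∧
    ((Subgroup.closure {P1, P2, P3} : Subgroup (Equiv.Perm AdmTuple)) : Set (Equiv.Perm AdmTuple)) =
      ((Subgroup.closure {P2, P3} : Subgroup (Equiv.Perm AdmTuple)) : Set (Equiv.Perm AdmTuple)) ∪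
      ((· * P1) '' ((Subgroup.closure {P2, P3} : Subgroup (Equiv.Perm AdmTuple)) : Set (Equiv.Perm AdmTuple))) ∪
      ((· * (P1 * P1)) '' ((Subgroup.closure {P2, P3} : Subgroup (Equiv.Perm AdmTuple)) : Set (Equiv.Perm AdmTuple))) := by
  classical
  -- basic relations among P1, P2, P3
  have l1 : P1 * (P1 * P1) = 1 := by
    apply Equiv.ext; intro x; apply Subtype.ext
    show ((P1 (P1 (P1 x))) : Tuple) = (x : Tuple)
    rw [hP1, hP1, hP1]; exact psi111 _
  have l2 : P2 * P2 = 1 := by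
    apply Equiv.ext; intro x; apply Subtype.ext
    show ((P2 (P2 x)) : Tuple) = (x : Tuple)
    rw [hP2, hP2]; exact psi22 _
  have l3 : P3 * P3 = 1 := by
    apply Equiv.ext; intro x; apply Subtype.ext
    show ((P3 (P3 x)) : Tuple) = (x : Tuple)
    rw [hP3, hP3]; exact psi33 _ x.2.1.2.2.1
  have l13 : P1 * P3 = P3 * P1 := by
    apply Equiv.ext; intro x; apply Subtype.ext
    show ((P1 (P3 x)) : Tuple) = ((P3 (P1 x)) : Tuple)
    rw [hP1, hP3, hP3, hP1]; exact psi13 _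
  have l23 : P2 * P3 = P3 * P2 := by
    apply Equiv.ext; intro x; apply Subtype.ext
    show ((P2 (P3 x)) : Tuple) = ((P3 (P2 x)) : Tuple)
    rw [hP2, hP3, hP3, hP2]; exact psi23 _
  have l212 : P2 * P1 * P2 = P1 * P1 := by
    apply Equiv.ext; intro x; apply Subtype.ext
    show ((P2 (P1 (P2 x))) : Tuple) = ((P1 (P1 x)) : Tuple)
    rw [hP2, hP1, hP2, hP1, hP1]; exact psi212 _
  obtain ⟨A, hA⟩ : ∃ A : Equiv.Perm AdmTuple, A = P1 * P3 := ⟨_, rfl⟩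
  have hA2' : A ^ 2 = P1 * P1 := by
    rw [pow_two, hA, mul_assoc, ← mul_assoc P3 P1 P3, ← l13, mul_assoc P1 P3 P3, l3, mul_one]
  have hA3 : A ^ 3 = P3 := by
    rw [pow_succ, hA2', hA, ← mul_assoc, mul_assoc P1 P1 P1, l1, one_mul]
  have hA4 : A ^ 4 = P1 := by
    rw [pow_succ, hA3, hA, ← mul_assoc, ← l13, mul_assoc, l3, mul_one]
  have hA5 : A ^ 5 = P3 * (P1 * P1) := by
    rw [pow_succ, hA4, hA, l13, ← mul_assoc, l13, mul_assoc]
  have hA6 : A ^ 6 = 1 := by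
    rw [pow_succ, hA5, hA, mul_assoc, ← mul_assoc (P1*P1) P1 P3, mul_assoc P1 P1 P1, l1,
      one_mul, l3]
  have hbase : P2 * A * P2 = A⁻¹ := by
    have h5 : A ^ 5 = A⁻¹ := eq_inv_of_mul_eq_one_left (by rw [← pow_succ, hA6])
    rw [← h5, hA5, hA, ← mul_assoc P2 P1 P3, mul_assoc (P2*P1) P3 P2, ← l23,
      ← mul_assoc (P2*P1) P2 P3, l212, mul_assoc, l13, ← mul_assoc, l13, mul_assoc]
  have hswap : ∀ m : ℕ, P2 * A ^ m * P2 = (A ^ m)⁻¹ := by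
    intro m
    induction m with
    | zero => rw [pow_zero, mul_one, l2, inv_one]
    | succ n ih =>
      conv_lhs => rw [pow_succ]
      conv_rhs => rw [pow_succ', mul_inv_rev, ← ih, ← hbase]
      simp only [mul_assoc]
      rw [← mul_assoc P2 P2, l2, one_mul]
  have hpowmod : ∀ m : ℕ, A ^ (m % 6) = A ^ m := by
    intro m
    conv_rhs => rw [← Nat.div_add_mod m 6]
    rw [pow_add, pow_mul, hA6, one_pow, one_mul]
  have hvadd : ∀ i j : ZMod 6, A ^ (i + j).val = A ^ i.val * A ^ j.val := by
    intro i j; rw [ZMod.val_add, hpowmod, pow_add]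
  have hswap' : ∀ i : ZMod 6, A ^ i.val * P2 = P2 * A ^ (-i).val := by
    intro i
    have h1 : P2 * A ^ (-i).val * P2 = (A ^ (-i).val)⁻¹ := hswap _
    have h2 : A ^ i.val * A ^ (-i).val = 1 := by
      rw [← hvadd, show i + -i = 0 by ring, show ((0:ZMod 6)).val = 0 from rfl, pow_zero]
    have h3 : (A ^ (-i).val)⁻¹ = A ^ i.val := inv_eq_of_mul_eq_one_left h2
    have h4 : P2 * A ^ (-i).val = (A ^ (-i).val)⁻¹ * P2 := by
      rw [← h1, mul_assoc, mul_assoc, l2, mul_one]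
    rw [h4, h3]
  -- the homomorphism from the dihedral group
  let φ : DihedralGroup 6 →* Equiv.Perm AdmTuple :=
    MonoidHom.mk'
      (fun x => DihedralGroup.casesOn x (fun i => A ^ i.val) (fun i => P2 * A ^ i.val))
      (by
        intro x y
        cases x with
        | r i =>
          cases y with
          | r j =>
            rw [DihedralGroup.r_mul_r]
            exact hvadd i j
          | sr j =>
            rw [DihedralGroup.r_mul_sr]
            show P2 * A ^ (j - i).val = A ^ i.val * (P2 * A ^ j.val)
            rw [← mul_assoc, hswap', mul_assoc, ← hvadd, show -i + j = j - i by ring]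
        | sr i =>
          cases y with
          | r j =>
            rw [DihedralGroup.sr_mul_r]
            show P2 * A ^ (i + j).val = (P2 * A ^ i.val) * A ^ j.val
            rw [mul_assoc, ← hvadd]
          | sr j =>
            rw [DihedralGroup.sr_mul_sr]
            show A ^ (j - i).val = (P2 * A ^ i.val) * (P2 * A ^ j.val)
            calc A ^ (j - i).val
                = A ^ (-i + j).val := by rw [show -i + j = j - i by ring]
              _ = A ^ (-i).val * A ^ j.val := hvadd _ _
              _ = (P2 * P2) * (A ^ (-i).val * A ^ j.val) := by rw [l2, one_mul]
              _ = P2 * ((P2 * A ^ (-i).val) * A ^ j.val) := by simp only [mul_assoc]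
              _ = P2 * ((A ^ i.val * P2) * A ^ j.val) := by rw [hswap']
              _ = (P2 * A ^ i.val) * (P2 * A ^ j.val) := by simp only [mul_assoc])
  have hφr : ∀ i : ZMod 6, φ (DihedralGroup.r i) = A ^ i.val := fun _ => rfl
  have hφsr : ∀ i : ZMod 6, φ (DihedralGroup.sr i) = P2 * A ^ i.val := fun _ => rfl
  -- values on the concrete admissible tuple F0
  have hcoeA : ∀ x : AdmTuple, ((A x : AdmTuple) : Tuple) = psi1 (psi3 (x : Tuple)) := by
    intro x
    rw [hA]
    show ((P1 (P3 x)) : Tuple) = _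
    rw [hP1, hP3]
  have w0 : (((A ^ 0) F0 : AdmTuple) : Tuple) = f0 := by rw [pow_zero]; rfl
  have w1 : (((A ^ 1) F0 : AdmTuple) : Tuple) = ⟨3,5,1,0,6,4⟩ := by
    rw [pow_one, hcoeA]; decide
  have w2 : (((A ^ 2) F0 : AdmTuple) : Tuple) = ⟨5,1,3,2,2,0⟩ := by
    rw [pow_succ']
    show ((A ((A ^ 1) F0) : AdmTuple) : Tuple) = _
    rw [hcoeA, w1]; decide
  have w3 : (((A ^ 3) F0 : AdmTuple) : Tuple) = ⟨1,3,5,4,0,6⟩ := by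
    rw [pow_succ']
    show ((A ((A ^ 2) F0) : AdmTuple) : Tuple) = _
    rw [hcoeA, w2]; decide
  have w4 : (((A ^ 4) F0 : AdmTuple) : Tuple) = ⟨3,5,1,0,2,2⟩ := by
    rw [pow_succ']
    show ((A ((A ^ 3) F0) : AdmTuple) : Tuple) = _
    rw [hcoeA, w3]; decide
  have w5 : (((A ^ 5) F0 : AdmTuple) : Tuple) = ⟨5,1,3,6,4,0⟩ := by
    rw [pow_succ']
    show ((A ((A ^ 4) F0) : AdmTuple) : Tuple) = _
    rw [hcoeA, w4]; decide
  have neR : ∀ (k : ℕ) (t : Tuple), (((A ^ k) F0 : AdmTuple) : Tuple) = t → t ≠ f0 →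
      A ^ k ≠ 1 := by
    intro k t hw hne h
    apply hne
    rw [← hw]
    show (((A ^ k) F0 : AdmTuple) : Tuple) = f0
    rw [h]; rfl
  have neS : ∀ (k : ℕ) (t : Tuple), (((A ^ k) F0 : AdmTuple) : Tuple) = t → psi2 t ≠ f0 →
      P2 * A ^ k ≠ 1 := by
    intro k t hw hne h
    apply hne
    rw [← hw, ← hP2]
    show (((P2 * A ^ k) F0 : AdmTuple) : Tuple) = f0
    rw [h]; rfl
  have ne1 := neR 1 _ w1 (by decide)
  have ne2 := neR 2 _ w2 (by decide)
  have ne3 := neR 3 _ w3 (by decide)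
  have ne4 := neR 4 _ w4 (by decide)
  have ne5 := neR 5 _ w5 (by decide)
  have neS0 := neS 0 _ w0 (by decide)
  have neS1 := neS 1 _ w1 (by decide)
  have neS2 := neS 2 _ w2 (by decide)
  have neS3 := neS 3 _ w3 (by decide)
  have neS4 := neS 4 _ w4 (by decide)
  have neS5 := neS 5 _ w5 (by decide)
  have hinj : Function.Injective φ := by
    rw [injective_iff_map_eq_one]
    intro a ha
    cases a with
    | r i =>
      have ha' : A ^ i.val = 1 := ha
      have hk : i.val < 6 := ZMod.val_lt i
      rcases (by omega : i.val = 0 ∨ i.val = 1 ∨ i.val = 2 ∨ i.val = 3 ∨ i.val = 4 ∨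
        i.val = 5) with h | h | h | h | h | h
      · rw [show i = 0 from (ZMod.val_eq_zero i).mp h]
        exact DihedralGroup.one_def.symm
      · exact absurd (h ▸ ha') ne1
      · exact absurd (h ▸ ha') ne2
      · exact absurd (h ▸ ha') ne3
      · exact absurd (h ▸ ha') ne4
      · exact absurd (h ▸ ha') ne5
    | sr i =>
      have ha' : P2 * A ^ i.val = 1 := ha
      have hk : i.val < 6 := ZMod.val_lt i
      exfalso
      rcases (by omega : i.val = 0 ∨ i.val = 1 ∨ i.val = 2 ∨ i.val = 3 ∨ i.val = 4 ∨
        i.val = 5) with h | h | h | h | h | h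
      · exact absurd (h ▸ ha') neS0
      · exact absurd (h ▸ ha') neS1
      · exact absurd (h ▸ ha') neS2
      · exact absurd (h ▸ ha') neS3
      · exact absurd (h ▸ ha') neS4
      · exact absurd (h ▸ ha') neS5
  have hP1m : P1 ∈ Subgroup.closure {P1, P2, P3} :=
    Subgroup.subset_closure (Set.mem_insert _ _)
  have hP2m : P2 ∈ Subgroup.closure {P1, P2, P3} :=
    Subgroup.subset_closure (Set.mem_insert_of_mem _ (Set.mem_insert _ _))
  have hP3m : P3 ∈ Subgroup.closure {P1, P2, P3} :=
    Subgroup.subset_closure (Set.mem_insert_of_mem _ (Set.mem_insert_of_mem _ rfl))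
  have hrange : φ.range = Subgroup.closure {P1, P2, P3} := by
    apply le_antisymm
    · rintro x ⟨y, rfl⟩
      have hAm : A ∈ Subgroup.closure {P1, P2, P3} := hA ▸ mul_mem hP1m hP3m
      cases y with
      | r i => exact pow_mem hAm _
      | sr i => exact mul_mem hP2m (pow_mem hAm _)
    · rw [Subgroup.closure_le]
      intro x hx
      simp only [Set.mem_insert_iff, Set.mem_singleton_iff] at hx
      rcases hx with rfl | rfl | rfl
      · exact ⟨DihedralGroup.r 4, by
          rw [hφr, show ((4:ZMod 6)).val = 4 by decide, hA4]⟩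
      · exact ⟨DihedralGroup.sr 0, by
          rw [hφsr, show ((0:ZMod 6)).val = 0 by decide, pow_zero, mul_one]⟩
      · exact ⟨DihedralGroup.r 3, by
          rw [hφr, show ((3:ZMod 6)).val = 3 by decide, hA3]⟩
  constructor
  · exact ⟨(MulEquiv.subgroupCongr hrange.symm).trans (MonoidHom.ofInjective hinj).symm⟩
  · have hK2 : P2 ∈ Subgroup.closure {P2, P3} :=
      Subgroup.subset_closure (Set.mem_insert _ _)
    have hK3 : P3 ∈ Subgroup.closure {P2, P3} :=
      Subgroup.subset_closure (Set.mem_insert_of_mem _ rfl)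
    have hKH : Subgroup.closure {P2, P3} ≤ Subgroup.closure {P1, P2, P3} := by
      rw [Subgroup.closure_le]
      intro x hx
      simp only [Set.mem_insert_iff, Set.mem_singleton_iff] at hx
      rcases hx with rfl | rfl
      · exact hP2m
      · exact hP3m
    apply Set.Subset.antisymm
    · intro x hx
      have hx2 : x ∈ Subgroup.closure {P1, P2, P3} := hx
      rw [← hrange] at hx2
      obtain ⟨y, rfl⟩ := hx2
      cases y with
      | r i =>
        rw [hφr]
        have hk : i.val < 6 := ZMod.val_lt i
        rcases (by omega : i.val = 0 ∨ i.val = 1 ∨ i.val = 2 ∨ i.val = 3 ∨ i.val = 4 ∨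
          i.val = 5) with h | h | h | h | h | h <;> rw [h]
        · exact Or.inl (Or.inl (by rw [pow_zero]; exact one_mem _))
        · exact Or.inl (Or.inr ⟨P3, hK3, by show P3 * P1 = A ^ 1; rw [pow_one, hA, l13]⟩)
        · exact Or.inr ⟨1, one_mem _, by show 1 * (P1 * P1) = A ^ 2; rw [one_mul, hA2']⟩
        · exact Or.inl (Or.inl (by rw [hA3]; exact hK3))
        · exact Or.inl (Or.inr ⟨1, one_mem _, by show 1 * P1 = A ^ 4; rw [one_mul, hA4]⟩)
        · exact Or.inr ⟨P3, hK3, by show P3 * (P1 * P1) = A ^ 5; rw [hA5]⟩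
      | sr i =>
        rw [hφsr]
        have hk : i.val < 6 := ZMod.val_lt i
        rcases (by omega : i.val = 0 ∨ i.val = 1 ∨ i.val = 2 ∨ i.val = 3 ∨ i.val = 4 ∨
          i.val = 5) with h | h | h | h | h | h <;> rw [h]
        · exact Or.inl (Or.inl (by rw [pow_zero, mul_one]; exact hK2))
        · exact Or.inl (Or.inr ⟨P2 * P3, mul_mem hK2 hK3, by show (P2 * P3) * P1 = P2 * A ^ 1; rw [pow_one, hA, mul_assoc, ← l13]⟩)
        · exact Or.inr ⟨P2, hK2, by show P2 * (P1 * P1) = P2 * A ^ 2; rw [hA2']⟩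
        · exact Or.inl (Or.inl (by rw [hA3]; exact mul_mem hK2 hK3))
        · exact Or.inl (Or.inr ⟨P2, hK2, by show P2 * P1 = P2 * A ^ 4; rw [hA4]⟩)
        · exact Or.inr ⟨P2 * P3, mul_mem hK2 hK3, by show (P2 * P3) * (P1 * P1) = P2 * A ^ 5; rw [hA5]; exact (mul_assoc P2 P3 (P1 * P1)).symm⟩
    · intro x hx
      rcases hx with (hx | ⟨g, hg, rfl⟩) | ⟨g, hg, rfl⟩
      · exact hKH hx
      · exact mul_mem (hKH hg) hP1m
      · exact mul_mem (hKH hg) (mul_mem hP1m hP1m)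

end GMN
end

section
/- On the set ℱ of admissible 6-tuples, the maps σ, ψ₂, ψ₃ satisfy σ∘σ=id, σ∘ψ₂=ψ₂∘σ, and σ∘ψ₃=ψ₃∘σ. -/
/-!
Common setup: 6-tuples, the coloured graph Γ(f), conditions (I)–(VI),
the maps ψ₁, ψ₂, ψ₃, σ, equivalences, traps, canonical/minimal/root tuples.
-/

namespace GMN

lemma mk_congr {x1 x2 x3 x4 x5 x6 y1 y2 y3 y4 y5 y6 : ℤ} (e1 : x1 = y1) (e2 : x2 = y2)
    (e3 : x3 = y3) (e4 : x4 = y4) (e5 : x5 = y5) (e6 : x6 = y6) :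
    Tuple.mk x1 x2 x3 x4 x5 x6 = Tuple.mk y1 y2 y3 y4 y5 y6 := by subst_vars; rfl

lemma emod_exact (x v m : ℤ) (k : ℤ) (h : x = v + m * k) (h0 : 0 ≤ v) (h1 : v < m) : x % m = v := by
  subst h; rw [Int.add_mul_emod_self_left]; exact Int.emod_eq_of_lt h0 h1

lemma emod_expand (x m : ℤ) : ∃ k, x % m = x + m * k := ⟨-(x / m), by rw [Int.emod_def]; ring⟩

lemma emod_congr {x x' m m' : ℤ} (hx : x = x') (hm : m = m') : x % m = x' % m' := by rw [hx, hm]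

lemma emod_congr_dvd (X Y M M' : ℤ) (hM : M' = M) (h : M ∣ X - Y) : X % M = Y % M' := by
  subst hM; rw [Int.emod_eq_emod_iff_emod_sub_eq_zero, Int.emod_eq_zero_of_dvd h]


lemma stmt11_caseA (a b c p q r : ℤ) (ha : 0 < a) (hb : 0 < b) (hc : 0 < c)
    (hP : p < c + a) (hp0 : ¬ p = 0) (hP0 : 0 ≤ p)
    (hQ0 : 0 ≤ q) (hQ : q < a + b) (hR0 : 0 ≤ r) (hR : r < b + c)
    (h1 : p < a) (h2 : p < c) :
    sigma (sigma ⟨a,b,c,p,q,r⟩) = ⟨a,b,c,p,q,r⟩ ∧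
    sigma (psi2 ⟨a,b,c,p,q,r⟩) = psi2 (sigma ⟨a,b,c,p,q,r⟩) ∧
    sigma (psi3 ⟨a,b,c,p,q,r⟩) = psi3 (sigma ⟨a,b,c,p,q,r⟩) := by
  have hs : sigma ⟨a,b,c,p,q,r⟩ = ⟨a + b - p, p, c + b - p,
      a + b + c - 2*p,
      (p + q + b) % ((a + b - p) + p),
      (p + r + b) % (p + (c + b - p))⟩ := by
    simp only [sigma]
    rw [if_neg hp0, if_pos (⟨h1, h2⟩ : p < a ∧ p < c)]
    rw [emod_exact (a + b + c - 2*p) (a + b + c - 2*p) ((c + b - p) + (a + b - p)) 0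
      (by ring) (by omega) (by omega)]
  have hs2 : sigma ⟨c,b,a,p,r,q⟩ = ⟨c + b - p, p, a + b - p,
      c + b + a - 2*p,
      (p + r + b) % ((c + b - p) + p),
      (p + q + b) % (p + (a + b - p))⟩ := by
    simp only [sigma]
    rw [if_neg hp0, if_pos (⟨h2, h1⟩ : p < c ∧ p < a)]
    rw [emod_exact (c + b + a - 2*p) (c + b + a - 2*p) ((a + b - p) + (c + b - p)) 0
      (by ring) (by omega) (by omega)]
  have hp3 : (-p) % (c + a) = c + a - p :=
    emod_exact _ _ _ (-1) (by ring) (by omega) (by omega)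
  have hs3 : sigma ⟨a,b,c,(-p) % (c + a),(-q) % (a + b),(-r) % (b + c)⟩ =
      ⟨(c + a - p) + b - c, a + c - (c + a - p), (c + a - p) + b - a,
      b,
      ((c + a - p) + (-q) % (a + b) - c) % (((c + a - p) + b - c) + (a + c - (c + a - p))),
      ((c + a - p) + (-r) % (b + c) - a) % ((a + c - (c + a - p)) + ((c + a - p) + b - a))⟩ := by
    simp only [sigma]
    rw [hp3]
    rw [if_neg (by omega : ¬ (c + a - p = 0)),
        if_neg (by omega : ¬ (c + a - p < a ∧ c + a - p < c)),
        if_pos (⟨by omega, by omega⟩ : a < c + a - p ∧ c < c + a - p)]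
    rw [emod_exact b b (((c + a - p) + b - a) + ((c + a - p) + b - c)) 0
      (by ring) (by omega) (by omega)]
  refine ⟨?_, ?_, ?_⟩
  · rw [hs]
    obtain ⟨k1, e1⟩ := emod_expand (p + q + b) ((a + b - p) + p)
    obtain ⟨k2, e2⟩ := emod_expand (p + r + b) (p + (c + b - p))
    simp only [sigma]
    rw [if_neg (by omega : ¬ (a + b + c - 2*p = 0)),
        if_neg (by omega : ¬ (a + b + c - 2*p < a + b - p ∧ a + b + c - 2*p < c + b - p)),
        if_pos (⟨by omega, by omega⟩ : a + b - p < a + b + c - 2*p ∧ c + b - p < a + b + c - 2*p)]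
    rw [e1, e2]
    refine mk_congr (by ring) (by ring) (by ring)
      (emod_exact _ _ _ 0 (by ring) (by omega) (by omega))
      (emod_exact _ _ _ (k1+1) (by ring) (by omega) (by omega))
      (emod_exact _ _ _ (k2+1) (by ring) (by omega) (by omega))
  · rw [hs]
    simp only [psi2]
    rw [hs2]
    exact mk_congr rfl rfl rfl (by ring) (emod_congr rfl (by ring)) (emod_congr rfl (by ring))
  · rw [hs]
    simp only [psi3]
    rw [hs3]
    obtain ⟨k1, e1⟩ := emod_expand (-q) (a + b)
    obtain ⟨k2, e2⟩ := emod_expand (-r) (b + c)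
    obtain ⟨k3, e3⟩ := emod_expand (p + q + b) ((a + b - p) + p)
    obtain ⟨k4, e4⟩ := emod_expand (p + r + b) (p + (c + b - p))
    rw [e1, e2, e3, e4]
    refine mk_congr (by ring) (by ring) (by ring)
      ((emod_exact _ _ _ (-1) (by ring) (by omega) (by omega)).symm)
      (emod_congr_dvd _ _ _ _ (by ring) ⟨k1 + k3 + 1, by ring⟩)
      (emod_congr_dvd _ _ _ _ (by ring) ⟨k2 + k4 + 1, by ring⟩)

lemma stmt11_caseB (a b c p q r : ℤ) (ha : 0 < a) (hb : 0 < b) (hc : 0 < c)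
    (hP : p < c + a) (hp0 : ¬ p = 0) (hP0 : 0 ≤ p)
    (hQ0 : 0 ≤ q) (hQ : q < a + b) (hR0 : 0 ≤ r) (hR : r < b + c)
    (h1 : a < p) (h2 : c < p) :
    sigma (sigma ⟨a,b,c,p,q,r⟩) = ⟨a,b,c,p,q,r⟩ ∧
    sigma (psi2 ⟨a,b,c,p,q,r⟩) = psi2 (sigma ⟨a,b,c,p,q,r⟩) ∧
    sigma (psi3 ⟨a,b,c,p,q,r⟩) = psi3 (sigma ⟨a,b,c,p,q,r⟩) := by
  have hs : sigma ⟨a,b,c,p,q,r⟩ = ⟨p + b - c, a + c - p, p + b - a,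
      b,
      (p + q - c) % ((p + b - c) + (a + c - p)),
      (p + r - a) % ((a + c - p) + (p + b - a))⟩ := by
    simp only [sigma]
    rw [if_neg hp0, if_neg (by omega : ¬ (p < a ∧ p < c)), if_pos (⟨h1, h2⟩ : a < p ∧ c < p)]
    rw [emod_exact b b ((p + b - a) + (p + b - c)) 0 (by ring) (by omega) (by omega)]
  have hs2 : sigma ⟨c,b,a,p,r,q⟩ = ⟨p + b - a, c + a - p, p + b - c,
      b,
      (p + r - a) % ((p + b - a) + (c + a - p)),
      (p + q - c) % ((c + a - p) + (p + b - c))⟩ := by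
    simp only [sigma]
    rw [if_neg hp0, if_neg (by omega : ¬ (p < c ∧ p < a)), if_pos (⟨h2, h1⟩ : c < p ∧ a < p)]
    rw [emod_exact b b ((p + b - c) + (p + b - a)) 0 (by ring) (by omega) (by omega)]
  have hp3 : (-p) % (c + a) = c + a - p :=
    emod_exact _ _ _ (-1) (by ring) (by omega) (by omega)
  have hs3 : sigma ⟨a,b,c,(-p) % (c + a),(-q) % (a + b),(-r) % (b + c)⟩ =
      ⟨a + b - (c + a - p), c + a - p, c + b - (c + a - p),
      a + b + c - 2*(c + a - p),
      ((c + a - p) + (-q) % (a + b) + b) % ((a + b - (c + a - p)) + (c + a - p)),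
      ((c + a - p) + (-r) % (b + c) + b) % ((c + a - p) + (c + b - (c + a - p)))⟩ := by
    simp only [sigma]
    rw [hp3]
    rw [if_neg (by omega : ¬ (c + a - p = 0)),
        if_pos (⟨by omega, by omega⟩ : c + a - p < a ∧ c + a - p < c)]
    rw [emod_exact (a + b + c - 2*(c + a - p)) (a + b + c - 2*(c + a - p))
      ((c + b - (c + a - p)) + (a + b - (c + a - p))) 0 (by ring) (by omega) (by omega)]
  refine ⟨?_, ?_, ?_⟩
  · rw [hs]
    obtain ⟨k1, e1⟩ := emod_expand (p + q - c) ((p + b - c) + (a + c - p))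
    obtain ⟨k2, e2⟩ := emod_expand (p + r - a) ((a + c - p) + (p + b - a))
    simp only [sigma]
    rw [if_neg (by omega : ¬ (b = 0)),
        if_pos (⟨by omega, by omega⟩ : b < p + b - c ∧ b < p + b - a)]
    rw [e1, e2]
    refine mk_congr (by ring) (by ring) (by ring)
      (emod_exact _ _ _ 0 (by ring) (by omega) (by omega))
      (emod_exact _ _ _ (k1+1) (by ring) (by omega) (by omega))
      (emod_exact _ _ _ (k2+1) (by ring) (by omega) (by omega))
  · rw [hs]
    simp only [psi2]
    rw [hs2]
    exact mk_congr rfl (by ring) rfl rfl (emod_congr rfl (by ring)) (emod_congr rfl (by ring))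
  · rw [hs]
    simp only [psi3]
    rw [hs3]
    obtain ⟨k1, e1⟩ := emod_expand (-q) (a + b)
    obtain ⟨k2, e2⟩ := emod_expand (-r) (b + c)
    obtain ⟨k3, e3⟩ := emod_expand (p + q - c) ((p + b - c) + (a + c - p))
    obtain ⟨k4, e4⟩ := emod_expand (p + r - a) ((a + c - p) + (p + b - a))
    rw [e1, e2, e3, e4]
    refine mk_congr (by ring) (by ring) (by ring)
      ((emod_exact _ _ _ (-1) (by ring) (by omega) (by omega)).symm)
      (emod_congr_dvd _ _ _ _ (by ring) ⟨k1 + k3 + 1, by ring⟩)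
      (emod_congr_dvd _ _ _ _ (by ring) ⟨k2 + k4 + 1, by ring⟩)

lemma stmt11_caseC (a b c p q r : ℤ) (ha : 0 < a) (hb : 0 < b) (hc : 0 < c)
    (hP : p < c + a) (hp0 : ¬ p = 0) (hP0 : 0 ≤ p)
    (hQ0 : 0 ≤ q) (hQ : q < a + b) (hR0 : 0 ≤ r) (hR : r < b + c)
    (h1 : a < p) (h2 : p < c) :
    sigma (sigma ⟨a,b,c,p,q,r⟩) = ⟨a,b,c,p,q,r⟩ ∧
    sigma (psi2 ⟨a,b,c,p,q,r⟩) = psi2 (sigma ⟨a,b,c,p,q,r⟩) ∧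
    sigma (psi3 ⟨a,b,c,p,q,r⟩) = psi3 (sigma ⟨a,b,c,p,q,r⟩) := by
  have hs : sigma ⟨a,b,c,p,q,r⟩ = ⟨b, a, b + c - a,
      b + c - p,
      q,
      (2*p + r + b - a) % (a + (b + c - a))⟩ := by
    simp only [sigma]
    rw [if_neg hp0, if_neg (by omega : ¬ (p < a ∧ p < c)),
        if_neg (by omega : ¬ (a < p ∧ c < p)), if_pos h2]
    rw [emod_exact (b + c - p) (b + c - p) ((b + c - a) + b) 0 (by ring) (by omega) (by omega),
        emod_exact q q (b + a) 0 (by ring) (by omega) (by omega)]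
  have hs2 : sigma ⟨c,b,a,p,r,q⟩ = ⟨b + c - a, a, b,
      b + c - p,
      (2*p + r + b - a) % ((b + c - a) + a),
      q⟩ := by
    simp only [sigma]
    rw [if_neg hp0, if_neg (by omega : ¬ (p < c ∧ p < a)),
        if_neg (by omega : ¬ (c < p ∧ a < p)), if_neg (by omega : ¬ (p < a))]
    rw [emod_exact (b + c - p) (b + c - p) (b + (b + c - a)) 0 (by ring) (by omega) (by omega),
        emod_exact q q (a + b) 0 (by ring) (by omega) (by omega)]
  have hp3 : (-p) % (c + a) = c + a - p :=
    emod_exact _ _ _ (-1) (by ring) (by omega) (by omega)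
  have hs3 : sigma ⟨a,b,c,(-p) % (c + a),(-q) % (a + b),(-r) % (b + c)⟩ =
      ⟨b, a, b + c - a,
      b + c - (c + a - p),
      ((-q) % (a + b)) % (b + a),
      (2*(c + a - p) + (-r) % (b + c) + b - a) % (a + (b + c - a))⟩ := by
    simp only [sigma]
    rw [hp3]
    rw [if_neg (by omega : ¬ (c + a - p = 0)),
        if_neg (by omega : ¬ (c + a - p < a ∧ c + a - p < c)),
        if_neg (by omega : ¬ (a < c + a - p ∧ c < c + a - p)),
        if_pos (by omega : c + a - p < c)]
    rw [emod_exact (b + c - (c + a - p)) (b + c - (c + a - p)) ((b + c - a) + b) 0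
      (by ring) (by omega) (by omega)]
  refine ⟨?_, ?_, ?_⟩
  · rw [hs]
    obtain ⟨k2, e2⟩ := emod_expand (2*p + r + b - a) (a + (b + c - a))
    simp only [sigma]
    rw [if_neg (by omega : ¬ (b + c - p = 0)),
        if_neg (by omega : ¬ (b + c - p < b ∧ b + c - p < b + c - a)),
        if_neg (by omega : ¬ (b < b + c - p ∧ b + c - a < b + c - p)),
        if_pos (by omega : b + c - p < b + c - a)]
    rw [e2]
    refine mk_congr rfl rfl (by ring)
      (emod_exact _ _ _ 0 (by ring) (by omega) (by omega))
      (emod_exact _ _ _ 0 (by ring) (by omega) (by omega))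
      (emod_exact _ _ _ (k2+2) (by ring) (by omega) (by omega))
  · rw [hs]
    simp only [psi2]
    rw [hs2]
    exact mk_congr rfl rfl rfl rfl (emod_congr rfl (by ring)) rfl
  · rw [hs]
    simp only [psi3]
    rw [hs3]
    obtain ⟨k1, e1⟩ := emod_expand (-q) (a + b)
    obtain ⟨k2, e2⟩ := emod_expand (-r) (b + c)
    obtain ⟨k3, e3⟩ := emod_expand (2*p + r + b - a) (a + (b + c - a))
    rw [e1, e2, e3]
    refine mk_congr rfl rfl rfl
      ((emod_exact _ _ _ (-1) (by ring) (by omega) (by omega)).symm)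
      (emod_congr_dvd _ _ _ _ (by ring) ⟨k1, by ring⟩)
      (emod_congr_dvd _ _ _ _ (by ring) ⟨k2 + k3 + 2, by ring⟩)

lemma stmt11_caseD (a b c p q r : ℤ) (ha : 0 < a) (hb : 0 < b) (hc : 0 < c)
    (hP : p < c + a) (hp0 : ¬ p = 0) (hP0 : 0 ≤ p)
    (hQ0 : 0 ≤ q) (hQ : q < a + b) (hR0 : 0 ≤ r) (hR : r < b + c)
    (h1 : p < a) (h2 : c < p) :
    sigma (sigma ⟨a,b,c,p,q,r⟩) = ⟨a,b,c,p,q,r⟩ ∧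
    sigma (psi2 ⟨a,b,c,p,q,r⟩) = psi2 (sigma ⟨a,b,c,p,q,r⟩) ∧
    sigma (psi3 ⟨a,b,c,p,q,r⟩) = psi3 (sigma ⟨a,b,c,p,q,r⟩) := by
  have hs : sigma ⟨a,b,c,p,q,r⟩ = ⟨b + a - c, c, b,
      b + a - p,
      (2*p + q + b - c) % ((b + a - c) + c),
      r⟩ := by
    simp only [sigma]
    rw [if_neg hp0, if_neg (by omega : ¬ (p < a ∧ p < c)),
        if_neg (by omega : ¬ (a < p ∧ c < p)), if_neg (by omega : ¬ (p < c))]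
    rw [emod_exact (b + a - p) (b + a - p) (b + (b + a - c)) 0 (by ring) (by omega) (by omega),
        emod_exact r r (c + b) 0 (by ring) (by omega) (by omega)]
  have hs2 : sigma ⟨c,b,a,p,r,q⟩ = ⟨b, c, b + a - c,
      b + a - p,
      r,
      (2*p + q + b - c) % (c + (b + a - c))⟩ := by
    simp only [sigma]
    rw [if_neg hp0, if_neg (by omega : ¬ (p < c ∧ p < a)),
        if_neg (by omega : ¬ (c < p ∧ a < p)), if_pos (by omega : p < a)]
    rw [emod_exact (b + a - p) (b + a - p) ((b + a - c) + b) 0 (by ring) (by omega) (by omega),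
        emod_exact r r (b + c) 0 (by ring) (by omega) (by omega)]
  have hp3 : (-p) % (c + a) = c + a - p :=
    emod_exact _ _ _ (-1) (by ring) (by omega) (by omega)
  have hs3 : sigma ⟨a,b,c,(-p) % (c + a),(-q) % (a + b),(-r) % (b + c)⟩ =
      ⟨b + a - c, c, b,
      b + a - (c + a - p),
      (2*(c + a - p) + (-q) % (a + b) + b - c) % ((b + a - c) + c),
      ((-r) % (b + c)) % (c + b)⟩ := by
    simp only [sigma]
    rw [hp3]
    rw [if_neg (by omega : ¬ (c + a - p = 0)),
        if_neg (by omega : ¬ (c + a - p < a ∧ c + a - p < c)),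
        if_neg (by omega : ¬ (a < c + a - p ∧ c < c + a - p)),
        if_neg (by omega : ¬ (c + a - p < c))]
    rw [emod_exact (b + a - (c + a - p)) (b + a - (c + a - p)) (b + (b + a - c)) 0
      (by ring) (by omega) (by omega)]
  refine ⟨?_, ?_, ?_⟩
  · rw [hs]
    obtain ⟨k1, e1⟩ := emod_expand (2*p + q + b - c) ((b + a - c) + c)
    simp only [sigma]
    rw [if_neg (by omega : ¬ (b + a - p = 0)),
        if_neg (by omega : ¬ (b + a - p < b + a - c ∧ b + a - p < b)),
        if_neg (by omega : ¬ (b + a - c < b + a - p ∧ b < b + a - p)),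
        if_neg (by omega : ¬ (b + a - p < b))]
    rw [e1]
    refine mk_congr (by ring) rfl rfl
      (emod_exact _ _ _ 0 (by ring) (by omega) (by omega))
      (emod_exact _ _ _ (k1+2) (by ring) (by omega) (by omega))
      (emod_exact _ _ _ 0 (by ring) (by omega) (by omega))
  · rw [hs]
    simp only [psi2]
    rw [hs2]
    exact mk_congr rfl rfl rfl rfl rfl (emod_congr rfl (by ring))
  · rw [hs]
    simp only [psi3]
    rw [hs3]
    obtain ⟨k1, e1⟩ := emod_expand (-q) (a + b)
    obtain ⟨k2, e2⟩ := emod_expand (-r) (b + c)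
    obtain ⟨k3, e3⟩ := emod_expand (2*p + q + b - c) ((b + a - c) + c)
    rw [e1, e2, e3]
    refine mk_congr rfl rfl rfl
      ((emod_exact _ _ _ (-1) (by ring) (by omega) (by omega)).symm)
      (emod_congr_dvd _ _ _ _ (by ring) ⟨k1 + k3 + 2, by ring⟩)
      (emod_congr_dvd _ _ _ _ (by ring) ⟨k2, by ring⟩)


/-- on `ℱ`, `σ² = 1`, `σψ₂ = ψ₂σ` and `σψ₃ = ψ₃σ`. -/
theorem stmt_11 (f : Tuple) (hf : Admissible f) :
    sigma (sigma f) = f ∧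
    sigma (psi2 f) = psi2 (sigma f) ∧
    sigma (psi3 f) = psi3 (sigma f) := by
  obtain ⟨a,b,c,p,q,r⟩ := f
  obtain ⟨⟨hI, hII, hIII, hIV⟩, hV, -⟩ := hf
  have ha := hI 0; have hb := hI 1; have hc := hI 2
  have g0 := hIII 0; have g1 := hIII 1; have g2 := hIII 2
  have pab := hII 0 1; have pbc := hII 1 2
  have pv := hV 0
  have s0 : (0 : ZMod 3) - 1 = 2 := by decide
  have s1 : (1 : ZMod 3) - 1 = 0 := by decide
  have s2 : (2 : ZMod 3) - 1 = 1 := by decide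
  have e10 : ((1 : ZMod 3) = 0) = False := by decide
  have e20 : ((2 : ZMod 3) = 0) = False := by decide
  have e21 : ((2 : ZMod 3) = 1) = False := by decide
  simp only [Tuple.h, Tuple.q, Tuple.twol, s0, s1, s2, e10, e20, e21,
    eq_self_iff_true, if_true, if_false] at ha hb hc g0 g1 g2 pab pbc pv
  by_cases hp0 : p = 0
  · subst hp0
    refine ⟨by simp [sigma], by simp [sigma, psi2], by simp [sigma, psi3]⟩
  · have hpa : p ≠ a := by omega
    have hpc : p ≠ c := by omega
    rcases lt_or_gt_of_ne hpa with h1 | h1 <;> rcases lt_or_gt_of_ne hpc with h2 | h2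
    · exact stmt11_caseA a b c p q r ha hb hc g0.2 hp0 g0.1 g1.1 g1.2 g2.1 g2.2 h1 h2
    · exact stmt11_caseD a b c p q r ha hb hc g0.2 hp0 g0.1 g1.1 g1.2 g2.1 g2.2 h1 h2
    · exact stmt11_caseC a b c p q r ha hb hc g0.2 hp0 g0.1 g1.1 g1.2 g2.1 g2.2 h1 h2
    · exact stmt11_caseB a b c p q r ha hb hc g0.2 hp0 g0.1 g1.1 g1.2 g2.1 g2.2 h1 h2

end GMN
end

section
/- Let f be an admissible 6-tuple. (a) If f is a trap, then its G-orbit {g(f) : g∈G} is a finite set. (b) If f is not a trap, then its G-orbit contains no trap; equivalently, every 6-tuple G-equivalent to a trap is itself a trap. -/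
/-!
Common setup: 6-tuples, the coloured graph Γ(f), conditions (I)–(VI),
the maps ψ₁, ψ₂, ψ₃, σ, equivalences, traps, canonical/minimal/root tuples.
-/

namespace GMN

/-!
A trap of type `(r,s)` is `H`-equivalent to a tuple `(r,r,s;x,0,y)` whose pair `(x,y)`
satisfies the residue condition. The rotations of all such tuples form a finite family, and it
is closed under `ψ₁, ψ₂, ψ₃` and under `σ`: by the residue condition either `x = 0`, and
`σ` fixes the tuple, or `r < x < s`, and `σ` sends `(r,r,s;x,0,y)` to `(r,r,s;-x,0,2x+y)`, a
substitution under which the residue condition is invariant. As `ψ₃` and `σ` are involutions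
on admissible tuples, `G`-equivalence preserves membership in the family, hence being a trap,
and it keeps the orbit of a trap inside the finite family.
-/

lemma eqvGen_map {α β : Type*} {r : α → α → Prop} {r' : β → β → Prop} (φ : α → β)
    (hφ : ∀ a b, r a b → r' (φ a) (φ b)) {a b : α} (h : Relation.EqvGen r a b) :
    Relation.EqvGen r' (φ a) (φ b) := by
  induction h with
  | rel a b h => exact .rel _ _ (hφ a b h)
  | refl a => exact .refl _
  | symm a b _ ih => exact .symm _ _ ih
  | trans a b c _ _ ih₁ ih₂ => exact .trans _ _ _ ih₁ ih₂

lemma iff_of_eqvGen {α : Type*} {r : α → α → Prop} {P : α → Prop}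
    (hP : ∀ a b, r a b → (P a ↔ P b)) {a b : α} (h : Relation.EqvGen r a b) : P a ↔ P b :=
  (Equivalence.eqvGen_iff ⟨Iff.refl, Iff.symm, Iff.trans⟩).1 (eqvGen_map P hP h)

section ThreeOrbits

variable {f f' : Tuple} {S : Set (Fin 4)} (φ : ZMod 3 × ℤ ≃ ZMod 3 × ℤ)

lemma OrbRel.map (hV : ∀ v, φ v ∈ Vtx f' ↔ v ∈ Vtx f)
    (hι : ∀ c ∈ S, ∀ v, φ (iota f c v) = iota f' c (φ v)) {a b : ZMod 3 × ℤ}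
    (h : OrbRel f S a b) : OrbRel f' S (φ a) (φ b) :=
  eqvGen_map φ (fun _ _ ⟨ha, hb, c, hc, hab⟩ =>
    ⟨(hV _).2 ha, (hV _).2 hb, c, hc, hab ▸ hι c hc _⟩) h

lemma ThreeOrbits.of_equiv (hV : ∀ v, φ v ∈ Vtx f' ↔ v ∈ Vtx f)
    (hι : ∀ c ∈ S, ∀ v, φ (iota f c v) = iota f' c (φ v)) (h : ThreeOrbits f S) :
    ThreeOrbits f' S := by
  have hV' : ∀ v, φ.symm v ∈ Vtx f ↔ v ∈ Vtx f' := fun v => by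
    rw [← hV, Equiv.apply_symm_apply]
  have hι' : ∀ c ∈ S, ∀ v, φ.symm (iota f' c v) = iota f c (φ.symm v) := fun c hc v => by
    rw [Equiv.symm_apply_eq, hι c hc, Equiv.apply_symm_apply]
  have back : ∀ a b, OrbRel f' S (φ a) (φ b) → OrbRel f S a b := fun a b hab => by
    simpa using OrbRel.map φ.symm hV' hι' hab
  obtain ⟨a, b, c, ha, hb, hc, hab, hac, hbc, hcover⟩ := h
  refine ⟨φ a, φ b, φ c, (hV a).2 ha, (hV b).2 hb, (hV c).2 hc,
    fun h => hab (back _ _ h), fun h => hac (back _ _ h), fun h => hbc (back _ _ h),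
    fun v hv => ?_⟩
  have hmap : ∀ x, OrbRel f S x (φ.symm v) → OrbRel f' S (φ x) v := fun x h => by
    simpa using OrbRel.map φ hV hι h
  exact (hcover _ ((hV' v).2 hv)).imp (hmap a) (.imp (hmap b) (hmap c))

end ThreeOrbits

section Psi1

lemma psi1_h (f : Tuple) (i : ZMod 3) : (psi1 f).h i = f.h (i + 1) := by
  fin_cases i <;> rfl

lemma psi1_q (f : Tuple) (i : ZMod 3) : (psi1 f).q i = f.q (i + 1) := by
  fin_cases i <;> rfl

lemma psi1_twol (f : Tuple) (i : ZMod 3) : (psi1 f).twol i = f.twol (i + 1) := by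
  fin_cases i <;> rfl

/-- `ψ₁` relabels the components of `Γ(f)` by `i ↦ i - 1`. -/
def relabel : ZMod 3 × ℤ ≃ ZMod 3 × ℤ := (Equiv.subRight 1).prodCongr (Equiv.refl ℤ)

@[simp] lemma relabel_apply (p : ZMod 3 × ℤ) : relabel p = (p.1 - 1, p.2) := rfl

lemma relabel_mem_vtx_psi1 (f : Tuple) (p : ZMod 3 × ℤ) :
    relabel p ∈ Vtx (psi1 f) ↔ p ∈ Vtx f := by
  simp [Vtx, psi1_twol]

lemma iota2_psi1 (f : Tuple) (p : ZMod 3 × ℤ) :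
    iota2 (psi1 f) (relabel p) = relabel (iota2 f p) := by
  simp only [iota2, relabel_apply, psi1_h, psi1_twol, sub_add_cancel]
  split_ifs <;> simp

lemma iota3_psi1 (f : Tuple) (p : ZMod 3 × ℤ) :
    iota3 (psi1 f) (relabel p) = relabel (iota3 f p) := by
  have hρ : ∀ p, rho (psi1 f) (relabel p) = relabel (rho f p) := fun p => by
    simp [rho, psi1_q, psi1_twol]
  have hρ' : ∀ p, rhoInv (psi1 f) (relabel p) = relabel (rhoInv f p) := fun p => by
    simp [rhoInv, psi1_q, psi1_twol]
  simp only [iota3, Function.comp_apply, hρ', iota2_psi1, hρ]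

lemma Admissible.psi1 {f : Tuple} (hf : Admissible f) : Admissible (psi1 f) := by
  obtain ⟨⟨hI, hII, hIII, hIV⟩, hV, hVI⟩ := hf
  refine ⟨⟨fun i => ?_, fun i j => ?_, fun i => ?_, fun i j => ?_⟩, fun i => ?_, ?_⟩
  · rw [psi1_h]; exact hI _
  · rw [psi1_h, psi1_h]; exact hII _ _
  · rw [psi1_q, psi1_twol]; exact hIII _
  · rw [psi1_q, psi1_q]; exact hIV _ _
  · rw [psi1_h, psi1_q]; exact hV _
  · refine hVI.of_equiv relabel (relabel_mem_vtx_psi1 f) fun c hc v => ?_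
    rcases hc with rfl | rfl
    exacts [(iota2_psi1 f v).symm, (iota3_psi1 f v).symm]

end Psi1

lemma neg_emod_neg_emod {q m : ℤ} (h₀ : 0 ≤ q) (h : q < m) : -(-q % m) % m = q := by
  rw [(Int.mod_modEq _ _).neg.eq, neg_neg, Int.emod_eq_of_lt h₀ h]

lemma psi3_psi3 {f : Tuple} (hIII : CondIII f) : psi3 (psi3 f) = f := by
  have h₀ : 0 ≤ f.q0 ∧ f.q0 < f.h2 + f.h0 := hIII 0
  have h₁ : 0 ≤ f.q1 ∧ f.q1 < f.h0 + f.h1 := hIII 1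
  have h₂ : 0 ≤ f.q2 ∧ f.q2 < f.h1 + f.h2 := hIII 2
  simp only [psi3, neg_emod_neg_emod h₀.1 h₀.2, neg_emod_neg_emod h₁.1 h₁.2,
    neg_emod_neg_emod h₂.1 h₂.2]

section TrapPair

variable {r s : ℤ}

lemma inT_neg_emod (hr : 0 < r) {x : ℤ} (h : inT r s (x % (r + s))) :
    inT r s (-x % (r + s)) := by
  rw [← (Int.mod_modEq x (r + s)).neg]
  rcases h with h | ⟨h₁, h₂⟩
  · simp [h, inT]
  · rw [show -(x % (r + s)) = r + s - x % (r + s) + (r + s) * (-1) by ring,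
      Int.add_mul_emod_self_left, Int.emod_eq_of_lt (by omega) (by omega)]
    exact .inr ⟨by omega, by omega⟩

/-- The condition on `(q₀, q₂)` in the definition of a trap of type `(r,s)`, with `k`
ranging over `ℤ`; the `q₂`-half of the definition is then automatic. -/
def TrapPair (r s u v : ℤ) : Prop := ∀ k : ℤ, inT r s ((u + k * (u + v)) % (r + s))

namespace TrapPair

variable {u v : ℤ}

lemma of_modEq {u' v' : ℤ} (h : TrapPair r s u v) (hu : u ≡ u' [ZMOD r + s])
    (hv : v ≡ v' [ZMOD r + s]) : TrapPair r s u' v' := fun k =>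
  ((hu.add ((hu.add hv).mul_left k)) : _ % _ = _ % _) ▸ h k

lemma neg (hr : 0 < r) (h : TrapPair r s u v) : TrapPair r s (-u) (-v) := fun k => by
  have := inT_neg_emod hr (h k)
  rwa [show -(u + k * (u + v)) = -u + k * (-u + -v) by ring] at this

lemma swap (hr : 0 < r) (h : TrapPair r s u v) : TrapPair r s v u := fun k => by
  have := inT_neg_emod hr (h (-k - 1))
  rwa [show -(u + (-k - 1) * (u + v)) = v + k * (v + u) by ring] at this

lemma sigma (hr : 0 < r) (h : TrapPair r s u v) :
    TrapPair r s (-u) (2 * u + v) := fun k => by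
  have := inT_neg_emod hr (h (-k))
  rwa [show -(u + -k * (u + v)) = -u + k * (-u + (2 * u + v)) by ring] at this

end TrapPair

lemma trapPair_iff (hr : 0 < r) (hrs : r ≤ s) {u v : ℤ} :
    TrapPair r s u v ↔ ∀ k : ℕ, inT r s ((u + (k : ℤ) * (u + v)) % (r + s)) ∧
      inT r s ((v + (k : ℤ) * (u + v)) % (r + s)) := by
  refine ⟨fun h k => ⟨h k, add_comm u v ▸ h.swap hr k⟩, fun h k => ?_⟩
  have hk : 0 ≤ k % (r + s) := Int.emod_nonneg k (by omega)
  have hper : u + k % (r + s) * (u + v) ≡ u + k * (u + v) [ZMOD r + s] :=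
    ((Int.mod_modEq k _).mul_right _).add_left u
  have := (h (k % (r + s)).toNat).1
  rwa [Int.toNat_of_nonneg hk, hper.eq] at this

end TrapPair

section TrapForm

variable {r s : ℤ}

/-- The rotations of `(r,r,s;x,0,y)` under `ψ₁`, with `x, y` reduced mod `r + s`; for
admissible 6-tuples these are exactly the traps of type `(r,s)`. -/
def IsTrapForm (r s : ℤ) (f : Tuple) : Prop :=
  ∃ x y : ℤ, 0 ≤ x ∧ x < r + s ∧ 0 ≤ y ∧ y < r + s ∧ TrapPair r s x y ∧
    (f = ⟨r, r, s, x, 0, y⟩ ∨ f = ⟨r, s, r, 0, x, y⟩ ∨ f = ⟨s, r, r, x, y, 0⟩)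

namespace IsTrapForm

variable {f : Tuple}

lemma psi1 (hr : 0 < r) (h : IsTrapForm r s f) : IsTrapForm r s (psi1 f) := by
  obtain ⟨x, y, hx₀, hx, hy₀, hy, hxy, rfl | rfl | rfl⟩ := h
  · exact ⟨y, x, hy₀, hy, hx₀, hx, hxy.swap hr, .inr (.inl rfl)⟩
  · exact ⟨x, y, hx₀, hx, hy₀, hy, hxy, .inr (.inr rfl)⟩
  · exact ⟨y, x, hy₀, hy, hx₀, hx, hxy.swap hr, .inl rfl⟩

lemma psi2 (hr : 0 < r) (h : IsTrapForm r s f) : IsTrapForm r s (psi2 f) := by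
  obtain ⟨x, y, hx₀, hx, hy₀, hy, hxy, rfl | rfl | rfl⟩ := h
  · exact ⟨x, y, hx₀, hx, hy₀, hy, hxy, .inr (.inr rfl)⟩
  · exact ⟨y, x, hy₀, hy, hx₀, hx, hxy.swap hr, .inr (.inl rfl)⟩
  · exact ⟨x, y, hx₀, hx, hy₀, hy, hxy, .inl rfl⟩

lemma psi3 (hr : 0 < r) (hrs : r ≤ s) (h : IsTrapForm r s f) : IsTrapForm r s (psi3 f) := by
  have hn : 0 < r + s := by omega
  obtain ⟨x, y, -, -, -, -, hxy, hf⟩ := h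
  refine ⟨-x % (r + s), -y % (r + s), Int.emod_nonneg _ hn.ne', Int.emod_lt_of_pos _ hn,
    Int.emod_nonneg _ hn.ne', Int.emod_lt_of_pos _ hn,
    (hxy.neg hr).of_modEq (Int.mod_modEq _ _).symm (Int.mod_modEq _ _).symm, ?_⟩
  rcases hf with rfl | rfl | rfl <;> simp [GMN.psi3, add_comm s r]

lemma sigma (hr : 0 < r) (hrs : r ≤ s) (h : IsTrapForm r s f) : IsTrapForm r s (sigma f) := by
  have hn : 0 < r + s := by omega
  obtain ⟨x, y, hx₀, hx, hy₀, hy, hxy, hf⟩ := h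
  rcases eq_or_ne x 0 with rfl | hx0
  · rcases hf with rfl | rfl | rfl <;>
      simpa [GMN.sigma] using ⟨0, y, le_rfl, hn, hy₀, hy, hxy, by simp⟩
  obtain ⟨hrx, hxs⟩ : r < x ∧ x < s :=
    (show inT r s x by simpa [Int.emod_eq_of_lt hx₀ hx] using hxy 0).resolve_left hx0
  have hxr : ¬ x < r := by omega
  have hsx : ¬ s < x := by omega
  have hx' : -x % (r + s) = r + s - x := by
    rw [show -x = r + s - x + (r + s) * (-1) by ring, Int.add_mul_emod_self_left,
      Int.emod_eq_of_lt (by omega) (by omega)]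
  have hxy' : TrapPair r s (r + s - x) ((2 * x + y) % (r + s)) :=
    hx' ▸ (hxy.sigma hr).of_modEq (Int.mod_modEq _ _).symm (Int.mod_modEq _ _).symm
  have hb := Int.emod_nonneg (2 * x + y) hn.ne'
  have hb' := Int.emod_lt_of_pos (2 * x + y) hn
  rcases hf with rfl | rfl | rfl
  · refine ⟨_, _, by omega, by omega, hb, hb', hxy', .inl ?_⟩
    simp [GMN.sigma, hx0, hxr, hsx, hxs, hx', add_comm s r]
  · simpa [GMN.sigma] using ⟨x, y, hx₀, hx, hy₀, hy, hxy, by simp⟩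
  · refine ⟨_, _, by omega, by omega, hb, hb', hxy', .inr (.inr ?_)⟩
    simp [GMN.sigma, hx0, hxr, hsx, hxs, hx', add_comm s r]

end IsTrapForm

lemma isTrapForm_iff_of_hEquiv (hr : 0 < r) (hrs : r ≤ s) {a b : Tuple} (h : HEquiv a b) :
    IsTrapForm r s a ↔ IsTrapForm r s b := by
  refine iff_of_eqvGen (fun a b ⟨ha, _, hab⟩ => ?_) h
  rcases hab with rfl | rfl | rfl
  · exact ⟨.psi1 hr, fun h => h.psi1 hr |>.psi1 hr⟩
  · exact ⟨.psi2 hr, fun h => h.psi2 hr⟩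
  · exact ⟨.psi3 hr hrs, fun h => psi3_psi3 ha.1.2.2.1 ▸ h.psi3 hr hrs⟩

end TrapForm

section Involution

lemma emod_eq_of_sub_emod {E X m M v : ℤ} (k : ℤ) (hm : m = M)
    (hE : E - X % m = v - X + M * k) (h₀ : 0 ≤ v) (h₁ : v < M) : E % M = v := by
  subst hm
  rw [show E = X % m + (v - X + m * k) by linarith, Int.emod_add_emod,
    show X + (v - X + m * k) = v + m * k by ring, Int.add_mul_emod_self_left,
    Int.emod_eq_of_lt h₀ h₁]

lemma emod_eq_of_eq {E M v : ℤ} (hE : E = v) (h₀ : 0 ≤ v) (h₁ : v < M) : E % M = v := by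
  rw [hE]; exact Int.emod_eq_of_lt h₀ h₁

variable {a b c d e g : ℤ}

lemma sigma_sigma_of_lt_of_lt (hb : 0 < b) (hd : 0 < d) (hda : d < a) (hdc : d < c)
    (he : 0 ≤ e ∧ e < a + b) (hg : 0 ≤ g ∧ g < b + c) :
    sigma (sigma ⟨a, b, c, d, e, g⟩) = ⟨a, b, c, d, e, g⟩ := by
  have hq : (a + b + c - 2 * d) % (c + b - d + (a + b - d)) = a + b + c - 2 * d :=
    Int.emod_eq_of_lt (by omega) (by omega)
  simp only [sigma, hd.ne', hda, hdc, and_self, ↓reduceIte, hq,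
    show a + b + c - 2 * d ≠ 0 by omega, show ¬ a + b + c - 2 * d < a + b - d by omega,
    show a + b - d < a + b + c - 2 * d by omega, show c + b - d < a + b + c - 2 * d by omega,
    false_and, Tuple.mk.injEq]
  refine ⟨by ring, by ring, by ring, emod_eq_of_eq (by ring) (by omega) (by omega),
    emod_eq_of_sub_emod (X := d + e + b) (m := a + b - d + d) 1 (by ring) (by ring)
      he.1 (by omega),
    emod_eq_of_sub_emod (X := d + g + b) (m := d + (c + b - d)) 1 (by ring) (by ring)
      hg.1 (by omega)⟩

lemma sigma_sigma_of_gt_of_gt (hb : 0 < b) (had : a < d) (hcd : c < d) (hd : d < c + a)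
    (he : 0 ≤ e ∧ e < a + b) (hg : 0 ≤ g ∧ g < b + c) :
    sigma (sigma ⟨a, b, c, d, e, g⟩) = ⟨a, b, c, d, e, g⟩ := by
  have hq : b % (d + b - a + (d + b - c)) = b := Int.emod_eq_of_lt (by omega) (by omega)
  simp only [sigma, show d ≠ 0 by omega, show ¬ d < a by omega, had, hcd, and_self,
    ↓reduceIte, hq, hb.ne', show b < d + b - c by omega, show b < d + b - a by omega,
    false_and, true_and, Tuple.mk.injEq]
  refine ⟨by ring, by ring, emod_eq_of_eq (by ring) (by omega) (by omega),
    emod_eq_of_sub_emod (X := d + e - c) (m := d + b - c + (a + c - d)) 1 (by ring) (by ring)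
      he.1 (by omega),
    emod_eq_of_sub_emod (X := d + g - a) (m := a + c - d + (d + b - a)) 1 (by ring) (by ring)
      hg.1 (by omega)⟩

lemma sigma_sigma_of_gt_of_lt (ha : 0 < a) (hb : 0 < b) (had : a < d) (hdc : d < c)
    (he : 0 ≤ e ∧ e < a + b) (hg : 0 ≤ g ∧ g < b + c) :
    sigma (sigma ⟨a, b, c, d, e, g⟩) = ⟨a, b, c, d, e, g⟩ := by
  have hq : (b + c - d) % (b + c - a + b) = b + c - d := Int.emod_eq_of_lt (by omega) (by omega)
  simp only [sigma, show d ≠ 0 by omega, show ¬ d < a by omega, show ¬ c < d by omega, hdc,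
    ↓reduceIte, hq, show b + c - d ≠ 0 by omega, show ¬ b + c - d < b by omega,
    show ¬ b + c - a < b + c - d by omega, show b + c - d < b + c - a by omega,
    false_and, and_false, true_and, Tuple.mk.injEq]
  refine ⟨by ring, emod_eq_of_eq (by ring) (by omega) (by omega),
    emod_eq_of_sub_emod (X := e) (m := b + a) 0 (by ring) (by ring) he.1 (by omega),
    emod_eq_of_sub_emod (X := 2 * d + g + b - a) (m := a + (b + c - a)) 2 (by ring) (by ring)
      hg.1 (by omega)⟩

lemma sigma_sigma_of_lt_of_gt (hb : 0 < b) (hc : 0 < c) (hcd : c < d) (hda : d < a)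
    (he : 0 ≤ e ∧ e < a + b) (hg : 0 ≤ g ∧ g < b + c) :
    sigma (sigma ⟨a, b, c, d, e, g⟩) = ⟨a, b, c, d, e, g⟩ := by
  have hq : (b + a - d) % (b + (b + a - c)) = b + a - d := Int.emod_eq_of_lt (by omega) (by omega)
  simp only [sigma, show d ≠ 0 by omega, show ¬ d < c by omega, show ¬ a < d by omega, hda,
    ↓reduceIte, hq, show b + a - d ≠ 0 by omega, show ¬ b + a - d < b by omega,
    show ¬ b + a - c < b + a - d by omega, show b + a - d < b + a - c by omega,
    false_and, and_false, true_and, Tuple.mk.injEq]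
  refine ⟨by ring, emod_eq_of_eq (by ring) (by omega) (by omega),
    emod_eq_of_sub_emod (X := 2 * d + e + b - c) (m := b + a - c + c) 2 (by ring) (by ring)
      he.1 (by omega),
    emod_eq_of_sub_emod (X := g) (m := c + b) 0 (by ring) (by ring) hg.1 (by omega)⟩

lemma sigma_sigma {f : Tuple} (hI : CondI f) (hII : CondII f) (hIII : CondIII f)
    (hV : CondV f) : sigma (sigma f) = f := by
  obtain ⟨a, b, c, d, e, g⟩ := f
  have ha : 0 < a := hI 0
  have hb : 0 < b := hI 1
  have hc : 0 < c := hI 2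
  have hd : 0 ≤ d ∧ d < c + a := hIII 0
  have he : 0 ≤ e ∧ e < a + b := hIII 1
  have hg : 0 ≤ g ∧ g < b + c := hIII 2
  have hII₀₂ : a % 2 = c % 2 := hII 0 2
  have hV₀ : (a + d) % 2 = 1 := hV 0
  rcases hd.1.eq_or_lt with rfl | hd₀
  · simp [sigma]
  -- by (II) and (V), `q₀` differs from `h₀` and `h₂` in parity, so one branch of `σ` applies
  rcases lt_or_gt_of_ne (show d ≠ a by omega) with hda | had <;>
    rcases lt_or_gt_of_ne (show d ≠ c by omega) with hdc | hcd
  · exact sigma_sigma_of_lt_of_lt hb hd₀ hda hdc he hg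
  · exact sigma_sigma_of_lt_of_gt hb hc hcd hda he hg
  · exact sigma_sigma_of_gt_of_lt ha hb had hdc he hg
  · exact sigma_sigma_of_gt_of_gt hb had hcd hd.2 he hg

end Involution

section Traps

variable {r s : ℤ} {f : Tuple}

lemma hEquiv_psi1 (hf : Admissible f) : HEquiv f (psi1 f) := .rel _ _ ⟨hf, hf.psi1, .inl rfl⟩

lemma isTrap_of_hEquiv {x y : ℤ} (hr : 0 < r) (hrs : r ≤ s) (hxy : TrapPair r s x y)
    (hg : Admissible ⟨r, r, s, x, 0, y⟩) (h : HEquiv f ⟨r, r, s, x, 0, y⟩) : IsTrap f :=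
  ⟨r, s, hr, hrs, _, hg, h, rfl, rfl, rfl, rfl, (trapPair_iff hr hrs).1 hxy⟩

lemma IsTrapForm.isTrap (hr : 0 < r) (hrs : r ≤ s) (h : IsTrapForm r s f) (hf : Admissible f) :
    IsTrap f := by
  obtain ⟨x, y, -, -, -, -, hxy, rfl | rfl | rfl⟩ := h
  · exact isTrap_of_hEquiv hr hrs hxy hf (.refl _)
  · exact isTrap_of_hEquiv hr hrs (hxy.swap hr) hf.psi1.psi1
      (.trans _ _ _ (hEquiv_psi1 hf) (hEquiv_psi1 hf.psi1))
  · exact isTrap_of_hEquiv hr hrs (hxy.swap hr) hf.psi1 (hEquiv_psi1 hf)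

lemma IsTrap.exists_isTrapForm (h : IsTrap f) :
    ∃ r s, 0 < r ∧ r ≤ s ∧ IsTrapForm r s f := by
  obtain ⟨r, s, hr, hrs, g, hg, hfg, h₀, h₁, h₂, h₃, hxy⟩ := h
  have hx : 0 ≤ g.q0 ∧ g.q0 < g.h2 + g.h0 := hg.1.2.2.1 0
  have hy : 0 ≤ g.q2 ∧ g.q2 < g.h1 + g.h2 := hg.1.2.2.1 2
  have hg_eq : g = ⟨r, r, s, g.q0, 0, g.q2⟩ := by cases g; simp_all
  exact ⟨r, s, hr, hrs, (isTrapForm_iff_of_hEquiv hr hrs hfg).2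
    ⟨g.q0, g.q2, by omega, by omega, by omega, by omega, (trapPair_iff hr hrs).2 hxy,
      .inl hg_eq⟩⟩

lemma isTrapForm_iff_of_gEquiv (hr : 0 < r) (hrs : r ≤ s) {a b : Tuple} (h : GEquiv a b) :
    IsTrapForm r s a ↔ IsTrapForm r s b := by
  refine iff_of_eqvGen (fun a b ⟨ha, hb, hab⟩ => ?_) h
  rcases hab with hab | hab | hab | rfl
  · exact isTrapForm_iff_of_hEquiv hr hrs (.rel _ _ ⟨ha, hb, .inl hab⟩)
  · exact isTrapForm_iff_of_hEquiv hr hrs (.rel _ _ ⟨ha, hb, .inr (.inl hab)⟩)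
  · exact isTrapForm_iff_of_hEquiv hr hrs (.rel _ _ ⟨ha, hb, .inr (.inr hab)⟩)
  refine ⟨.sigma hr hrs, fun h => ?_⟩
  rw [← sigma_sigma ha.1.1 ha.1.2.1 ha.1.2.2.1 ha.2.1]
  exact h.sigma hr hrs

lemma isTrap_iff_of_gEquiv {a b : Tuple} (h : GEquiv a b) : IsTrap a ↔ IsTrap b := by
  refine iff_of_eqvGen (fun a b hab => ⟨fun ha => ?_, fun hb => ?_⟩) h
  · obtain ⟨r, s, hr, hrs, hform⟩ := ha.exists_isTrapForm
    exact ((isTrapForm_iff_of_gEquiv hr hrs (.rel _ _ hab)).1 hform).isTrap hr hrs hab.2.1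
  · obtain ⟨r, s, hr, hrs, hform⟩ := hb.exists_isTrapForm
    exact ((isTrapForm_iff_of_gEquiv hr hrs (.rel _ _ hab)).2 hform).isTrap hr hrs hab.1

lemma IsTrapForm.finite (r s : ℤ) : {f | IsTrapForm r s f}.Finite := by
  refine (((Set.finite_Icc 0 (r + s)).prod (Set.finite_Icc 0 (r + s))).biUnion
    fun p _ => Set.toFinite ({⟨r, r, s, p.1, 0, p.2⟩, ⟨r, s, r, 0, p.1, p.2⟩,
      ⟨s, r, r, p.1, p.2, 0⟩} : Set Tuple)).subset ?_
  rintro f ⟨x, y, hx₀, hx, hy₀, hy, -, hf⟩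
  exact Set.mem_biUnion (x := (x, y)) ⟨⟨hx₀, hx.le⟩, hy₀, hy.le⟩ (by simpa using hf)

end Traps

theorem stmt_14_general (f : Tuple) :
    (IsTrap f → {g : Tuple | GEquiv f g}.Finite) ∧
    (¬ IsTrap f → ∀ g : Tuple, GEquiv f g → ¬ IsTrap g) := by
  refine ⟨fun hf => ?_, fun hf g hg hg' => hf ((isTrap_iff_of_gEquiv hg).2 hg')⟩
  obtain ⟨r, s, hr, hrs, hform⟩ := hf.exists_isTrapForm
  exact (IsTrapForm.finite r s).subset fun g hg => (isTrapForm_iff_of_gEquiv hr hrs hg).1 hform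

/-- (a) the `G`-orbit of a trap is finite; (b) the `G`-orbit of a
non-trap contains no trap. -/
theorem stmt_14 (f : Tuple) (hf : Admissible f) :
    (IsTrap f → {g : Tuple | GEquiv f g}.Finite) ∧
    (¬ IsTrap f → ∀ g : Tuple, GEquiv f g → ¬ IsTrap g) :=
  stmt_14_general f

end GMN
end

section
/- The map δ is constant on H′-orbits: for every admissible 6-tuple f∈ℱ and every h′∈H′=⟨ψ₂,ψ₃⟩, δ(h′(f))=δ(f); in particular δ(ψ₂(f))=δ(f) and δ(ψ₃(f))=δ(f). -/
/-!
Common setup: 6-tuples, the coloured graph Γ(f), conditions (I)–(VI),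
the maps ψ₁, ψ₂, ψ₃, σ, equivalences, traps, canonical/minimal/root tuples.
-/

namespace GMN

lemma delta_formula (f : Tuple) :
    delta f = if f.q0 = 0 then 0
      else if f.q0 < f.h0 ∧ f.q0 < f.h2 then f.h1 - f.q0
      else if f.h0 < f.q0 ∧ f.h2 < f.q0 then f.q0 + f.h1 - f.h0 - f.h2
      else if f.q0 < f.h2 then f.h1 - f.h0
      else f.h1 - f.h2 := by
  unfold delta nu sigma
  split_ifs <;> ring

lemma adm_facts (f : Tuple) (hf : Admissible f) :
    0 < f.h0 ∧ 0 < f.h1 ∧ 0 < f.h2 ∧ 0 ≤ f.q0 ∧ f.q0 < f.h2 + f.h0 ∧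
      f.q0 ≠ f.h0 ∧ f.q0 ≠ f.h2 := by
  obtain ⟨⟨hI, hII, hIII, _⟩, hV, _⟩ := hf
  have h0 := hI 0
  have h1 := hI 1
  have h2 := hI 2
  have hq0 := hIII 0
  have hv0 := hV 0
  have h02 := hII 0 2
  simp only [Tuple.h, Tuple.q, Tuple.twol, show ¬((2:ZMod 3) = 0) by decide,
    show ¬((2:ZMod 3) = 1) by decide, show ¬((1:ZMod 3) = 0) by decide,
    show ((0:ZMod 3) - 1) = 2 by decide, eq_self_iff_true, if_true, if_false,
    ite_true, ite_false] at h0 h1 h2 hq0 hv0 h02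
  refine ⟨h0, h1, h2, hq0.1, hq0.2, ?_, ?_⟩ <;> omega

lemma delta_psi2 (f : Tuple) (hf : Admissible f) : delta (psi2 f) = delta f := by
  obtain ⟨h0, h1, h2, hq0, hq0', hne0, hne2⟩ := adm_facts f hf
  rw [delta_formula, delta_formula]
  simp only [psi2]
  split_ifs <;> omega

lemma delta_psi3 (f : Tuple) (hf : Admissible f) : delta (psi3 f) = delta f := by
  obtain ⟨h0, h1, h2, hq0, hq0', hne0, hne2⟩ := adm_facts f hf
  have hQ : (-f.q0) % (f.h2 + f.h0) =
      if f.q0 = 0 then 0 else f.h2 + f.h0 - f.q0 := by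
    by_cases h : f.q0 = 0
    · simp [h]
    · rw [if_neg h]
      have e : (-f.q0) % (f.h2 + f.h0)
          = (f.h2 + f.h0 - f.q0) % (f.h2 + f.h0) := by
        rw [show -f.q0 = (f.h2 + f.h0 - f.q0) + (f.h2 + f.h0) * (-1) by ring,
          Int.add_mul_emod_self_left]
      rw [e, Int.emod_eq_of_lt (by omega) (by omega)]
  rw [delta_formula, delta_formula]
  simp only [psi3, hQ]
  split_ifs <;> omega

/-- `δ` is constant on `H′`-orbits; in particular
`δ(ψ₂(f)) = δ(f)` and `δ(ψ₃(f)) = δ(f)`. -/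
theorem stmt_15 (f : Tuple) (hf : Admissible f) :
    (∀ g : Tuple, H'Equiv f g → delta g = delta f) ∧
    delta (psi2 f) = delta f ∧ delta (psi3 f) = delta f := by
  have key : ∀ a b : Tuple, H'Equiv a b → delta b = delta a := by
    intro a b h
    induction h with
    | rel x y hxy =>
      obtain ⟨hx, _, h2 | h3⟩ := hxy
      · rw [h2]; exact delta_psi2 x hx
      · rw [h3]; exact delta_psi3 x hx
    | refl => rfl
    | symm _ _ _ ih => exact ih.symm
    | trans _ _ _ _ _ ih1 ih2 => exact ih2.trans ih1
  exact ⟨fun g hg => key f g hg, delta_psi2 f hf, delta_psi3 f hf⟩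

end GMN
end
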